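/- arXiv:1409.5511 — 7 statements merged into one kernel-verified Lean document; each statement's English description precedes it below -/
import Mathlib

section
/- In the weak commutativity group χ(H) of a group H, the subgroup R(H) = [H, L(H), H^ψ] is a normal subgroup of χ(H) which is invariant under the automorphism of χ(H) swapping H and H^ψ; moreover [W(H), H] ≤ R(H) ≤ W(H) ≤ D(H), and D(H) centralizes L(H), i.e. [D(H), L(H)] = 1. -/
open Subgroup
open scoped commutatorElement

/-- Relators of the weak commutativity group. -/
def chiRel (H : Type*) [Group H] : Set (Monoid.Coprod H H) :=
  {x | ∃ h : H, x = ⁅(Monoid.Coprod.inl h : Monoid.Coprod H H), Monoid.Coprod.inr h⁆}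

/-- The weak commutativity group χ(H). -/
def chi (H : Type*) [Group H] : Type _ :=
  Monoid.Coprod H H ⧸ Subgroup.normalClosure (chiRel H)

noncomputable instance (H : Type*) [Group H] : Group (chi H) :=
  QuotientGroup.Quotient.group _

/-- Canonical map H → χ(H). -/
noncomputable def chiIota (H : Type*) [Group H] : H →* chi H :=
  (QuotientGroup.mk' _).comp Monoid.Coprod.inl

/-- Canonical map H → χ(H), h ↦ h^ψ. -/
noncomputable def chiPsi (H : Type*) [Group H] : H →* chi H :=
  (QuotientGroup.mk' _).comp Monoid.Coprod.inr

noncomputable def chiH (H : Type*) [Group H] : Subgroup (chi H) := (chiIota H).range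
noncomputable def chiHpsi (H : Type*) [Group H] : Subgroup (chi H) := (chiPsi H).range

/-- L(H) = ⟨h⁻¹ h^ψ⟩. -/
noncomputable def Lsub (H : Type*) [Group H] : Subgroup (chi H) :=
  Subgroup.closure {x | ∃ h : H, x = (chiIota H h)⁻¹ * chiPsi H h}

/-- D(H) = [H, H^ψ]. -/
noncomputable def Dsub (H : Type*) [Group H] : Subgroup (chi H) := ⁅chiH H, chiHpsi H⁆

/-- W(H) = L(H) ∩ D(H). -/
noncomputable def Wsub (H : Type*) [Group H] : Subgroup (chi H) := Lsub H ⊓ Dsub H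

/-- R(H) = [H, L(H), H^ψ]. -/
noncomputable def Rsub (H : Type*) [Group H] : Subgroup (chi H) := ⁅⁅chiH H, Lsub H⁆, chiHpsi H⁆

/-!
Everything rests on one word identity in a group generated by commuting pairs `x_h, y_h`
(`x_h = ι h`, `y_h = ψ h`): the relation for `b * a` can be rewritten as
`x_b⁻¹ y_a x_b = y_b⁻¹ x_a y_b · l(a)` with `l(a) = x_a⁻¹ y_a`. Comparing this identity for `a`, `c`
and `a * c` shows that `l(a)` commutes with `[x_c, y_b]`, i.e. `[D, L] = 1`. The rest is subgroup
calculus: normality is checked on the generators `H ∪ H^ψ`, `R ≤ D` holds because `H` and `H^ψ`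
commute modulo `D`, `W ≤ [H, L]` follows from the retraction `χ(H) → H` that kills `L`, and swap
invariance of `R` is the three subgroups lemma together with `[D, L] = 1`.
-/

namespace Subgroup

variable {G : Type*} [Group G]

theorem normal_of_sup_eq_top_of_commutator_le {A B : Subgroup G} (hAB : A ⊔ B = ⊤)
    (h : ⁅A, B⁆ ≤ A) : A.Normal :=
  normalizer_eq_top_iff.mp <| top_le_iff.mp <|
    hAB ▸ sup_le le_normalizer (le_normalizer_iff_commutator_le_left.mpr h)

theorem commutator_normal_of_sup_eq_top {A B : Subgroup G} (hAB : A ⊔ B = ⊤) :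
    ⁅A, B⁆.Normal :=
  normalizer_eq_top_iff.mp <| top_le_iff.mp <|
    hAB ▸ sup_le (normalizer_commutator_ge_left A B) (normalizer_commutator_ge_right A B)

theorem commutator_commutator_le_of_rotate {H₁ H₂ H₃ N : Subgroup G} [N.Normal]
    (h1 : ⁅⁅H₂, H₃⁆, H₁⁆ ≤ N) (h2 : ⁅⁅H₃, H₁⁆, H₂⁆ ≤ N) : ⁅⁅H₁, H₂⁆, H₃⁆ ≤ N := by
  rw [← QuotientGroup.ker_mk' N, ← map_eq_bot_iff] at h1 h2 ⊢
  simp only [map_commutator] at h1 h2 ⊢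
  exact commutator_commutator_eq_bot_of_rotate h1 h2

theorem commutator_commutator_le_of_sup_eq_top {A B N : Subgroup G} [N.Normal]
    (hAB : A ⊔ B = ⊤) (h : ⁅A, B⁆ ≤ N) (X : Subgroup G) : ⁅⁅A, X⁆, B⁆ ≤ N := by
  set q := QuotientGroup.mk' N
  have hq : ⁅A.map q, B.map q⁆ = ⊥ := by
    rwa [← map_commutator, map_eq_bot_iff, QuotientGroup.ker_mk']
  have hsup : A.map q ⊔ B.map q = ⊤ := by
    rw [← map_sup, hAB, map_top_of_surjective _ (QuotientGroup.mk'_surjective N)]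
  have := normal_of_sup_eq_top_of_commutator_le hsup (hq ▸ bot_le)
  rw [← QuotientGroup.ker_mk' N, ← map_eq_bot_iff, map_commutator, map_commutator, ← le_bot_iff,
    ← hq]
  exact commutator_mono (commutator_le_left _ _) le_rfl

end Subgroup

theorem commutatorElement_mul_right_of_commute {G : Type*} [Group G] {x z : G} (y : G)
    (h : Commute x z) : ⁅x, y * z⁆ = ⁅x, y⁆ := by
  rw [commutatorElement_mul_right_eq_mul_conj, h.commutator_eq]
  group

namespace WeakCommutativity

variable {H G : Type*} [Group H] [Group G] {f g : H →* G}

theorem conj_right_eq_conj_left_mul (hc : ∀ h, Commute (f h) (g h)) (a b : H) :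
    (f b)⁻¹ * g a * f b = (g b)⁻¹ * f a * g b * ((f a)⁻¹ * g a) := by
  have hba : f b * f a * (g b * g a) = g b * g a * (f b * f a) := by
    simpa only [map_mul] using (hc (b * a)).eq
  calc (f b)⁻¹ * g a * f b
      = (f b)⁻¹ * (g b)⁻¹ * (g b * g a * (f b * f a)) * (f a)⁻¹ := by group
    _ = (f b)⁻¹ * (g b)⁻¹ * (f b * f a * (g b * g a)) * (f a)⁻¹ := by rw [hba]
    _ = ((f b)⁻¹ * (g b)⁻¹ * f b) * f a * g b * (g a * (f a)⁻¹) := by group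
    _ = (g b)⁻¹ * f a * g b * ((f a)⁻¹ * g a) := by
      rw [(hc b).inv_inv.eq, ← (hc a).inv_left.eq]
      group

theorem commute_inv_mul_commutatorElement (hc : ∀ h, Commute (f h) (g h)) (a b c : H) :
    Commute ((f a)⁻¹ * g a) ⁅f c, g b⁆ := by
  have key : ∀ b, Commute ((f a)⁻¹ * g a) ⁅(g b)⁻¹, f c⁆ := by
    intro b
    have hac := conj_right_eq_conj_left_mul hc (a * c) b
    rw [map_mul, map_mul, show (f b)⁻¹ * (g a * g c) * f b
        = ((f b)⁻¹ * g a * f b) * ((f b)⁻¹ * g c * f b) by group,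
      conj_right_eq_conj_left_mul hc a b, conj_right_eq_conj_left_mul hc c b] at hac
    rw [commute_iff_eq]
    calc (f a)⁻¹ * g a * ⁅(g b)⁻¹, f c⁆
        = ((g b)⁻¹ * (f a)⁻¹ * g b) * ((g b)⁻¹ * f a * g b * ((f a)⁻¹ * g a) *
            ((g b)⁻¹ * f c * g b * ((f c)⁻¹ * g c))) * (g c)⁻¹ := by
          rw [commutatorElement_def]; group
      _ = ((g b)⁻¹ * (f a)⁻¹ * g b) * ((g b)⁻¹ * (f a * f c) * g b *
            ((f a * f c)⁻¹ * (g a * g c))) * (g c)⁻¹ := by rw [hac]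
      _ = ⁅(g b)⁻¹, f c⁆ * ((f a)⁻¹ * g a) := by rw [commutatorElement_def]; group
  simpa only [map_inv, inv_inv, commutatorElement_inv] using (key b⁻¹).inv_right

end WeakCommutativity

section WeakCommutativityGroup

open WeakCommutativity

variable {H : Type*} [Group H]

local notation "ι" => chiIota H
local notation "ψ" => chiPsi H

theorem commute_chiIota_chiPsi (h : H) : Commute (ι h) (ψ h) :=
  commutatorElement_eq_one_iff_commute.mp <|
    (map_commutatorElement (QuotientGroup.mk' (normalClosure (chiRel H))) _ _).symm.trans <|
      (QuotientGroup.eq_one_iff _).mpr (subset_normalClosure ⟨h, rfl⟩)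

variable (H) in
theorem chiH_sup_chiHpsi : chiH H ⊔ chiHpsi H = ⊤ := by
  have hH : chiH H = Monoid.Coprod.inl.range.map (QuotientGroup.mk' _) :=
    MonoidHom.range_comp _ _
  have hHpsi : chiHpsi H = Monoid.Coprod.inr.range.map (QuotientGroup.mk' _) :=
    MonoidHom.range_comp _ _
  rw [hH, hHpsi]
  refine (Subgroup.map_sup _ _ _).symm.trans ?_
  rw [Monoid.Coprod.range_inl_sup_range_inr,
    map_top_of_surjective _ (QuotientGroup.mk'_surjective _)]
  rfl

variable (H) in
noncomputable def chiRetract : chi H →* H :=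
  QuotientGroup.lift _ (Monoid.Coprod.lift (MonoidHom.id H) (MonoidHom.id H)) <|
    normalClosure_le_normal <| by
      rintro _ ⟨h, rfl⟩
      simp [map_commutatorElement]

@[simp] theorem chiRetract_chiIota (h : H) : chiRetract H (ι h) = h := rfl

@[simp] theorem chiRetract_chiPsi (h : H) : chiRetract H (ψ h) = h := rfl

theorem inv_mul_mem_Lsub (h : H) : (ι h)⁻¹ * ψ h ∈ Lsub H :=
  subset_closure ⟨h, rfl⟩

variable (H) in
theorem Lsub_le_ker_chiRetract : Lsub H ≤ (chiRetract H).ker := by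
  rw [Lsub, closure_le]
  rintro _ ⟨h, rfl⟩
  simp

variable (H) in
theorem chiH_sup_Lsub : chiH H ⊔ Lsub H = ⊤ := by
  refine top_unique ((chiH_sup_chiHpsi H).symm.le.trans (sup_le le_sup_left ?_))
  rintro _ ⟨b, rfl⟩
  rw [← mul_inv_cancel_left (ι b) (ψ b)]
  exact mul_mem (mem_sup_left ⟨b, rfl⟩) (mem_sup_right (inv_mul_mem_Lsub b))

theorem normal_of_chiH_le_normalizer {K : Subgroup (chi H)} (hH : chiH H ≤ normalizer K)
    (hHpsi : chiHpsi H ≤ normalizer K) : K.Normal :=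
  normalizer_eq_top_iff.mp <| top_le_iff.mp <| chiH_sup_chiHpsi H ▸ sup_le hH hHpsi

variable (H) in
theorem Lsub_normal : (Lsub H).Normal := by
  have hH : chiH H ≤ normalizer (Lsub H) := by
    rw [Lsub, le_normalizer_closure_iff]
    rintro _ ⟨k, rfl⟩ _ ⟨h, rfl⟩
    have hcocycle : ι k * ((ι h)⁻¹ * ψ h) * (ι k)⁻¹
        = ((ι (h * k⁻¹))⁻¹ * ψ (h * k⁻¹)) * ((ι k⁻¹)⁻¹ * ψ k⁻¹)⁻¹ := by
      simp only [map_mul, map_inv]; group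
    rw [hcocycle]
    exact mul_mem (inv_mul_mem_Lsub _) (inv_mem (inv_mul_mem_Lsub _))
  refine normal_of_chiH_le_normalizer hH ?_
  rintro _ ⟨b, rfl⟩
  rw [← mul_inv_cancel_left (ι b) (ψ b)]
  exact mul_mem (hH ⟨b, rfl⟩) (le_normalizer (inv_mul_mem_Lsub b))

variable (H) in
theorem Dsub_normal : (Dsub H).Normal :=
  commutator_normal_of_sup_eq_top (chiH_sup_chiHpsi H)

variable (H) in
theorem commutator_chiH_Lsub_normal : ⁅chiH H, Lsub H⁆.Normal :=
  commutator_normal_of_sup_eq_top (chiH_sup_Lsub H)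

variable (H) in
theorem commutator_chiH_Lsub_le_Lsub : ⁅chiH H, Lsub H⁆ ≤ Lsub H :=
  have := Lsub_normal H
  commutator_le_right _ _

variable (H) in
theorem commutator_Dsub_Lsub : ⁅Dsub H, Lsub H⁆ = ⊥ := by
  rw [commutator_eq_bot_iff_le_centralizer, Dsub, commutator_le]
  rintro _ ⟨c, rfl⟩ _ ⟨b, rfl⟩
  rw [Lsub, centralizer_closure, mem_centralizer_iff]
  rintro _ ⟨a, rfl⟩
  exact (commute_inv_mul_commutatorElement commute_chiIota_chiPsi a b c).eq

theorem commute_of_mem_Dsub_of_mem_Lsub {d l : chi H} (hd : d ∈ Dsub H) (hl : l ∈ Lsub H) :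
    Commute d l :=
  commutatorElement_eq_one_iff_commute.mp <|
    (commutator_Dsub_Lsub H ▸ commutator_mem_commutator hd hl : ⁅d, l⁆ ∈ (⊥ : Subgroup _))

variable (H) in
theorem Rsub_normal : (Rsub H).Normal := by
  refine normal_of_chiH_le_normalizer ?_ (normalizer_commutator_ge_right _ _)
  rw [Rsub, commutator_def ⁅chiH H, Lsub H⁆, le_normalizer_closure_iff]
  rintro _ ⟨k, rfl⟩ _ ⟨t, ht, _, ⟨b, rfl⟩, rfl⟩
  have ht' : ι k * t * (ι k)⁻¹ ∈ ⁅chiH H, Lsub H⁆ :=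
    (commutator_chiH_Lsub_normal H).conj_mem t ht (ι k)
  -- conjugating `ψ b` by `ι k` only adds a factor from `D`, which commutes with `L ∋ t`
  have hd : ⁅(ψ b)⁻¹, ι k⁆ ∈ Dsub H := by
    rw [Dsub, commutator_comm]
    exact commutator_mem_commutator ⟨b⁻¹, by simp⟩ ⟨k, rfl⟩
  have hconj : ι k * ψ b * (ι k)⁻¹ = ψ b * ⁅(ψ b)⁻¹, ι k⁆ := by
    rw [commutatorElement_def]; group
  rw [conjugate_commutatorElement, hconj, commutatorElement_mul_right_of_commute _
    (commute_of_mem_Dsub_of_mem_Lsub hd (commutator_chiH_Lsub_le_Lsub H ht')).symm]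
  exact subset_closure ⟨_, ht', ψ b, ⟨b, rfl⟩, rfl⟩

variable (H) in
theorem Rsub_le_Lsub : Rsub H ≤ Lsub H :=
  have := commutator_chiH_Lsub_normal H
  (commutator_le_left _ _).trans (commutator_chiH_Lsub_le_Lsub H)

variable (H) in
theorem Rsub_le_Dsub : Rsub H ≤ Dsub H :=
  have := Dsub_normal H
  commutator_commutator_le_of_sup_eq_top (N := Dsub H) (chiH_sup_chiHpsi H) le_rfl _

variable (H) in
theorem Dsub_le_chiH_sup_commutator_chiH_Lsub : Dsub H ≤ chiH H ⊔ ⁅chiH H, Lsub H⁆ := by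
  rw [Dsub, commutator_le]
  rintro _ ⟨a, rfl⟩ _ ⟨b, rfl⟩
  rw [← mul_inv_cancel_left (ι b) (ψ b), commutatorElement_mul_right_eq_mul_conj, mul_assoc,
    mul_assoc, ← mul_assoc (ι b)]
  exact mul_mem
    (mem_sup_left (commutator_le_self _ (commutator_mem_commutator ⟨a, rfl⟩ ⟨b, rfl⟩)))
    (mem_sup_right ((commutator_chiH_Lsub_normal H).conj_mem _
      (commutator_mem_commutator ⟨a, rfl⟩ (inv_mul_mem_Lsub b)) _))

variable (H) in
theorem Wsub_le_commutator_chiH_Lsub : Wsub H ≤ ⁅chiH H, Lsub H⁆ := by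
  rintro w ⟨hwL, hwD⟩
  have := commutator_chiH_Lsub_normal H
  obtain ⟨_, ⟨x, rfl⟩, t, ht, rfl⟩ :=
    mem_sup_of_normal_right.mp (Dsub_le_chiH_sup_commutator_chiH_Lsub H hwD)
  have hx : x = 1 := by
    have hw1 : chiRetract H (ι x * t) = 1 := Lsub_le_ker_chiRetract H hwL
    have ht1 : chiRetract H t = 1 :=
      Lsub_le_ker_chiRetract H (commutator_chiH_Lsub_le_Lsub H ht)
    simpa [ht1] using hw1
  simpa [hx] using ht

variable (H) in
theorem commutator_Wsub_chiH_le_Rsub : ⁅Wsub H, chiH H⁆ ≤ Rsub H := by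
  rw [commutator_le]
  rintro w hw _ ⟨h, rfl⟩
  have hcomm : ⁅w, ι h⁆ = ⁅w, ψ h⁆ := by
    rw [← mul_inv_cancel_left (ι h) (ψ h), commutatorElement_mul_right_of_commute _
      (commute_of_mem_Dsub_of_mem_Lsub hw.2 (inv_mul_mem_Lsub h))]
  rw [hcomm]
  exact commutator_mem_commutator (Wsub_le_commutator_chiH_Lsub H hw) ⟨h, rfl⟩

theorem map_chiH_of_swap {σ : chi H →* chi H} (hι : ∀ h, σ (ι h) = ψ h) :
    (chiH H).map σ = chiHpsi H := by
  rw [chiH, MonoidHom.map_range, chiHpsi,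
    show σ.comp (chiIota H) = chiPsi H from MonoidHom.ext hι]

theorem map_chiHpsi_of_swap {σ : chi H →* chi H} (hψ : ∀ h, σ (ψ h) = ι h) :
    (chiHpsi H).map σ = chiH H := by
  rw [chiHpsi, MonoidHom.map_range, chiH,
    show σ.comp (chiPsi H) = chiIota H from MonoidHom.ext hψ]

theorem map_Lsub_le_of_swap {σ : chi H →* chi H} (hι : ∀ h, σ (ι h) = ψ h)
    (hψ : ∀ h, σ (ψ h) = ι h) : (Lsub H).map σ ≤ Lsub H := by
  rw [Lsub, MonoidHom.map_closure, closure_le]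
  rintro _ ⟨_, ⟨h, rfl⟩, rfl⟩
  have hσ : σ ((ι h)⁻¹ * ψ h) = ((ι h)⁻¹ * ψ h)⁻¹ := by
    rw [map_mul, map_inv, hι, hψ, mul_inv_rev, inv_inv]
  rw [SetLike.mem_coe, hσ]
  exact inv_mem (inv_mul_mem_Lsub h)

theorem map_Rsub_le_of_swap {σ : chi H →* chi H} (hι : ∀ h, σ (ι h) = ψ h)
    (hψ : ∀ h, σ (ψ h) = ι h) : (Rsub H).map σ ≤ Rsub H := by
  have := Rsub_normal H
  rw [Rsub, map_commutator, map_commutator, map_chiH_of_swap hι, map_chiHpsi_of_swap hψ]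
  refine (commutator_mono (commutator_mono le_rfl (map_Lsub_le_of_swap hι hψ)) le_rfl).trans ?_
  refine commutator_commutator_le_of_rotate (N := Rsub H) ?_ ?_
  · rw [commutator_comm (Lsub H)]; exact le_rfl
  · rw [← Dsub, commutator_Dsub_Lsub]; exact bot_le

end WeakCommutativityGroup

/-- Lemma 1 (i), (ii), (iv): R(H) is normal in χ(H) and invariant under the
automorphism of χ(H) swapping H and H^ψ; moreover
[W(H), H] ≤ R(H) ≤ W(H) ≤ D(H) and D(H) centralizes L(H). -/
theorem stmt_0 (H : Type*) [Group H] :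
    (Rsub H).Normal ∧
    (∀ σ : chi H ≃* chi H,
        (∀ h : H, σ (chiIota H h) = chiPsi H h) →
        (∀ h : H, σ (chiPsi H h) = chiIota H h) →
        (Rsub H).map (σ : chi H →* chi H) = Rsub H) ∧
    ⁅Wsub H, chiH H⁆ ≤ Rsub H ∧
    Rsub H ≤ Wsub H ∧
    Wsub H ≤ Dsub H ∧
    ⁅Dsub H, Lsub H⁆ = ⊥ := by
  refine ⟨Rsub_normal H, fun σ hι hψ => ?_, commutator_Wsub_chiH_le_Rsub H,
    le_inf (Rsub_le_Lsub H) (Rsub_le_Dsub H), inf_le_right, commutator_Dsub_Lsub H⟩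
  have hι' : ∀ h, σ.symm (chiIota H h) = chiPsi H h := fun h =>
    σ.symm_apply_eq.mpr (hψ h).symm
  have hψ' : ∀ h, σ.symm (chiPsi H h) = chiIota H h := fun h =>
    σ.symm_apply_eq.mpr (hι h).symm
  refine le_antisymm (map_Rsub_le_of_swap hι hψ) ?_
  rw [map_equiv_eq_comap_symm, ← map_le_iff_le_comap]
  exact map_Rsub_le_of_swap hι' hψ'
end

section
/- In the weak commutativity group χ(H) of a group H, for all h₁, h₂, h₃ ∈ H one has [h₁, h₂^ψ]^{h₃} = [h₁, h₂^ψ]^{h₃^ψ}, and the congruence [h₁, h₂^ψ]^{h₃} ≡ [h₁^{h₃}, (h₂^{h₃})^ψ] holds modulo R(H), i.e. [h₁, h₂^ψ]^{h₃}·[h₁^{h₃}, (h₂^{h₃})^ψ]⁻¹ ∈ R(H). -/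
/-!
Commutators are Mathlib's, `[a, b] = a b a⁻¹ b⁻¹`. Write `ℓ_z = z⁻¹ z^ψ` for the generators of
`L(H)`. Since `h` commutes with `h^ψ`, one has `[a, b^ψ] = [a^ψ, b]`; applied to `[z⁻¹ x, y^ψ]`
this shows that conjugation by `z` and by `z^ψ` agree on `[x, y^ψ]`, i.e. `L(H)` centralizes these
commutators. `L(H)` is normalized by `H` and `H^ψ`. For the congruence put `a = x^z`,
`q = (y^z)^ψ`; then `x^{z^ψ} = k a` with `k = [a, ℓ_z⁻¹]⁻¹ ∈ [H, L(H)]`, and since `k` and `[k, q]`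
lie in `L(H)` they commute with `[a, q]`, whence `[k a, q] [a, q]⁻¹ = [k, q] ∈ R(H)`.

Only the relation `[h, h^ψ] = 1` is used, so everything holds for any two homomorphisms
`ι ψ : H →* G` with `ι h` commuting with `ψ h`.
-/

open Subgroup
open scoped commutatorElement

theorem Subgroup.conj_mem_closure_of_forall {G : Type*} [Group G] {s : Set G} {c g : G}
    (hs : ∀ x ∈ s, c⁻¹ * x * c ∈ closure s) (hg : g ∈ closure s) : c⁻¹ * g * c ∈ closure s := by
  have hle : (closure s).map (MulAut.conj c⁻¹).toMonoidHom ≤ closure s := by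
    rw [MonoidHom.map_closure, closure_le]
    rintro _ ⟨x, hx, rfl⟩
    simpa using hs x hx
  simpa using hle ⟨g, hg, rfl⟩

theorem commutatorElement_mul_left_mul_inv_of_commute {G : Type*} [Group G] {k a q : G}
    (hk : Commute k ⁅a, q⁆) (hkq : Commute ⁅k, q⁆ ⁅a, q⁆) :
    ⁅k * a, q⁆ * ⁅a, q⁆⁻¹ = ⁅k, q⁆ := by
  rw [commutatorElement_mul_left_eq_conj_mul, hk.eq, mul_inv_cancel_right, hkq.symm.mul_inv_cancel]

namespace WeakCommutativity

variable {H G : Type*} [Group H] [Group G] (ι ψ : H →* G)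

def diffSubgroup : Subgroup G :=
  closure {x | ∃ h : H, x = (ι h)⁻¹ * ψ h}

theorem diff_mem_diffSubgroup (h : H) : (ι h)⁻¹ * ψ h ∈ diffSubgroup ι ψ :=
  subset_closure ⟨h, rfl⟩

variable {ι ψ}

theorem conj_left_mem_diffSubgroup {g : G} (hg : g ∈ diffSubgroup ι ψ) (u : H) :
    (ι u)⁻¹ * g * ι u ∈ diffSubgroup ι ψ := by
  refine conj_mem_closure_of_forall ?_ hg
  rintro _ ⟨h, rfl⟩
  have e : (ι u)⁻¹ * ((ι h)⁻¹ * ψ h) * ι u = ((ι (h * u))⁻¹ * ψ (h * u)) * ((ι u)⁻¹ * ψ u)⁻¹ := by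
    simp only [map_mul]; group
  rw [e]
  exact mul_mem (diff_mem_diffSubgroup ι ψ _) (inv_mem (diff_mem_diffSubgroup ι ψ _))

theorem conj_right_mem_diffSubgroup {g : G} (hg : g ∈ diffSubgroup ι ψ) (u : H) :
    (ψ u)⁻¹ * g * ψ u ∈ diffSubgroup ι ψ := by
  refine conj_mem_closure_of_forall ?_ hg
  rintro _ ⟨h, rfl⟩
  have e : (ψ u)⁻¹ * ((ι h)⁻¹ * ψ h) * ψ u = ((ι u)⁻¹ * ψ u)⁻¹ * ((ι (h * u))⁻¹ * ψ (h * u)) := by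
    simp only [map_mul]; group
  rw [e]
  exact mul_mem (inv_mem (diff_mem_diffSubgroup ι ψ _)) (diff_mem_diffSubgroup ι ψ _)

theorem commutatorElement_left_mem_diffSubgroup (u : H) {g : G} (hg : g ∈ diffSubgroup ι ψ) :
    ⁅ι u, g⁆ ∈ diffSubgroup ι ψ := by
  have e : ⁅ι u, g⁆ = (ι u⁻¹)⁻¹ * g * ι u⁻¹ * g⁻¹ := by
    rw [commutatorElement_def, map_inv, inv_inv]
  rw [e]
  exact mul_mem (conj_left_mem_diffSubgroup hg _) (inv_mem hg)

theorem commutatorElement_right_mem_diffSubgroup {g : G} (hg : g ∈ diffSubgroup ι ψ) (u : H) :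
    ⁅g, ψ u⁆ ∈ diffSubgroup ι ψ := by
  have e : ⁅g, ψ u⁆ = g * ((ψ u⁻¹)⁻¹ * g⁻¹ * ψ u⁻¹) := by
    rw [commutatorElement_def, map_inv, inv_inv]; group
  rw [e]
  exact mul_mem hg (conj_right_mem_diffSubgroup (inv_mem hg) _)

theorem commutatorElement_map_swap (hc : ∀ h, Commute (ι h) (ψ h)) (a b : H) :
    ⁅ι a, ψ b⁆ = ⁅ψ a, ι b⁆ := by
  have ha : (ψ a)⁻¹ * ι a = ι a * (ψ a)⁻¹ := (hc a).symm.inv_left.eq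
  have hb : (ψ b)⁻¹ * ι b = ι b * (ψ b)⁻¹ := (hc b).symm.inv_left.eq
  have hab : (ι a)⁻¹ * ι b * ((ψ a)⁻¹ * ψ b) = (ψ a)⁻¹ * ψ b * ((ι a)⁻¹ * ι b) := by
    simpa only [map_mul, map_inv, mul_assoc] using (hc (a⁻¹ * b)).eq
  have key : (ψ a)⁻¹ * ⁅ι a, ψ b⁆ * ι b = (ψ a)⁻¹ * ⁅ψ a, ι b⁆ * ι b := by
    calc (ψ a)⁻¹ * ⁅ι a, ψ b⁆ * ι b
        = ((ψ a)⁻¹ * ι a) * ψ b * (ι a)⁻¹ * ((ψ b)⁻¹ * ι b) := by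
          rw [commutatorElement_def]; group
      _ = ι a * (((ψ a)⁻¹ * ψ b) * ((ι a)⁻¹ * ι b)) * (ψ b)⁻¹ := by rw [ha, hb]; group
      _ = ι a * (((ι a)⁻¹ * ι b) * ((ψ a)⁻¹ * ψ b)) * (ψ b)⁻¹ := by rw [hab]
      _ = (ψ a)⁻¹ * ⁅ψ a, ι b⁆ * ι b := by rw [commutatorElement_def]; group
  exact mul_left_cancel (mul_right_cancel key)

theorem conj_left_commutatorElement_eq_conj_right (hc : ∀ h, Commute (ι h) (ψ h)) (x y z : H) :
    (ι z)⁻¹ * ⁅ι x, ψ y⁆ * ι z = (ψ z)⁻¹ * ⁅ι x, ψ y⁆ * ψ z := by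
  have h := commutatorElement_map_swap hc (z⁻¹ * x) y
  simp only [map_mul, map_inv, commutatorElement_mul_left_eq_conj_mul, inv_inv] at h
  have hz := commutatorElement_map_swap hc z⁻¹ y
  rw [map_inv, map_inv] at hz
  rw [← commutatorElement_map_swap hc x y, ← hz] at h
  exact mul_right_cancel h

theorem commute_diff_commutatorElement (hc : ∀ h, Commute (ι h) (ψ h)) (x y z : H) :
    Commute ((ι z)⁻¹ * ψ z) ⁅ι x, ψ y⁆ := by
  have h := conj_left_commutatorElement_eq_conj_right hc x y z
  have hz : ψ z * (ι z)⁻¹ = (ι z)⁻¹ * ψ z := (hc z).inv_left.eq.symm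
  rw [Commute, SemiconjBy, ← hz]
  calc ψ z * (ι z)⁻¹ * ⁅ι x, ψ y⁆ = ψ z * ((ι z)⁻¹ * ⁅ι x, ψ y⁆ * ι z) * (ι z)⁻¹ := by group
    _ = ψ z * ((ψ z)⁻¹ * ⁅ι x, ψ y⁆ * ψ z) * (ι z)⁻¹ := by rw [h]
    _ = ⁅ι x, ψ y⁆ * (ψ z * (ι z)⁻¹) := by group

theorem commute_commutatorElement_of_mem_diffSubgroup (hc : ∀ h, Commute (ι h) (ψ h)) {g : G}
    (hg : g ∈ diffSubgroup ι ψ) (x y : H) : Commute g ⁅ι x, ψ y⁆ := by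
  suffices diffSubgroup ι ψ ≤ centralizer {⁅ι x, ψ y⁆} from
    Commute.symm (mem_centralizer_iff.mp (this hg) _ rfl)
  refine closure_le _ |>.mpr ?_
  rintro _ ⟨z, rfl⟩
  exact mem_centralizer_iff.mpr fun _ h ↦ h ▸ (commute_diff_commutatorElement hc x y z).symm

theorem conj_left_commutatorElement_mul_inv_mem (hc : ∀ h, Commute (ι h) (ψ h)) (x y z : H) :
    (ι z)⁻¹ * ⁅ι x, ψ y⁆ * ι z * ⁅ι (z⁻¹ * x * z), ψ (z⁻¹ * y * z)⁆⁻¹ ∈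
      ⁅⁅ι.range, diffSubgroup ι ψ⁆, ψ.range⁆ := by
  set a := ι (z⁻¹ * x * z)
  set q := ψ (z⁻¹ * y * z)
  set l := (ι z)⁻¹ * ψ z
  set k := ⁅a, l⁻¹⁆⁻¹
  have hl : l ∈ diffSubgroup ι ψ := diff_mem_diffSubgroup ι ψ z
  have hk : k ∈ ⁅ι.range, diffSubgroup ι ψ⁆ :=
    inv_mem (commutator_mem_commutator ⟨_, rfl⟩ (inv_mem hl))
  have hkL : k ∈ diffSubgroup ι ψ :=
    inv_mem (commutatorElement_left_mem_diffSubgroup _ (inv_mem hl))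
  have hconj : (ψ z)⁻¹ * ⁅ι x, ψ y⁆ * ψ z = ⁅k * a, q⁆ := by
    simp only [k, a, q, l, map_mul, map_inv, commutatorElement_def]; group
  rw [conj_left_commutatorElement_eq_conj_right hc, hconj,
    commutatorElement_mul_left_mul_inv_of_commute
      (commute_commutatorElement_of_mem_diffSubgroup hc hkL _ _)
      (commute_commutatorElement_of_mem_diffSubgroup hc
        (commutatorElement_right_mem_diffSubgroup hkL _) _ _)]
  exact commutator_mem_commutator hk ⟨_, rfl⟩

end WeakCommutativity

open WeakCommutativity

theorem chiIota_commute_chiPsi (H : Type*) [Group H] (h : H) :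
    Commute (chiIota H h) (chiPsi H h) := by
  have e : ⁅chiIota H h, chiPsi H h⁆ = QuotientGroup.mk' (normalClosure (chiRel H))
      ⁅(Monoid.Coprod.inl h : Monoid.Coprod H H), Monoid.Coprod.inr h⁆ := by
    rw [map_commutatorElement]; rfl
  rw [← commutatorElement_eq_one_iff_commute, e, QuotientGroup.mk'_apply]
  exact (QuotientGroup.eq_one_iff _).mpr (subset_normalClosure ⟨h, rfl⟩)

/-- Lemma 1 (iii), (v): for all h₁, h₂, h₃ ∈ H one has
[h₁, h₂^ψ]^{h₃} = [h₁, h₂^ψ]^{h₃^ψ}, and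
[h₁, h₂^ψ]^{h₃} ≡ [h₁^{h₃}, (h₂^{h₃})^ψ] modulo R(H). -/
theorem stmt_1 (H : Type*) [Group H] (h₁ h₂ h₃ : H) :
    (chiIota H h₃)⁻¹ * ⁅chiIota H h₁, chiPsi H h₂⁆ * chiIota H h₃ =
      (chiPsi H h₃)⁻¹ * ⁅chiIota H h₁, chiPsi H h₂⁆ * chiPsi H h₃ ∧
    ((chiIota H h₃)⁻¹ * ⁅chiIota H h₁, chiPsi H h₂⁆ * chiIota H h₃) *
        ⁅chiIota H (h₃⁻¹ * h₁ * h₃), chiPsi H (h₃⁻¹ * h₂ * h₃)⁆⁻¹ ∈ Rsub H :=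
  ⟨conj_left_commutatorElement_eq_conj_right (chiIota_commute_chiPsi H) h₁ h₂ h₃,
    conj_left_commutatorElement_mul_inv_mem (chiIota_commute_chiPsi H) h₁ h₂ h₃⟩
end

section
/- For any group H, the abelianization L(H)/L(H)′ of the subgroup L(H) of the weak commutativity group χ(H) is isomorphic to the additive quotient group A_ℤ(H)/I₂(H). -/
open Subgroup
open scoped commutatorElement

open MonoidAlgebra

/-- The augmentation ideal A_ℤ(H) of the integral group ring ℤ(H),
generated by {h - 1 : h ∈ H}. -/
noncomputable def augIdeal (H : Type*) [Group H] : Ideal (MonoidAlgebra ℤ H) :=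
  Ideal.span {x | ∃ h : H, x = MonoidAlgebra.of ℤ H h - 1}

/-- The two-sided ideal I₂(H) of ℤ(H) generated by {(h - 1)² : h ∈ H}
(realized as the left span of all right multiples of the generators). -/
noncomputable def ideal2 (H : Type*) [Group H] : Ideal (MonoidAlgebra ℤ H) :=
  Ideal.span {x | ∃ (h : H) (b : MonoidAlgebra ℤ H),
    x = (MonoidAlgebra.of ℤ H h - 1) ^ 2 * b}

/-!
Write `ℓ(h) = h⁻¹ h^ψ`. Weak commutativity makes `h` commute with `ℓ(h)`, which gives
`ℓ(h²g) ℓ(g) ≡ ℓ(hg)²` modulo `L(H)′`; hence `h - 1 ↦ ℓ(h)` extends additively to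
`A_ℤ(H) → L(H)/L(H)′` and kills `I₂(H)`. Conversely `h ↦ (0, h)`, `h^ψ ↦ (h - 1, h)` defines
`χ(H) → (A_ℤ(H)/I₂(H)) ⋊ H`: the relation `[h, h^ψ] = 1` holds because
`h (h - 1) - (h - 1) = (h - 1)² ∈ I₂(H)`. It sends `ℓ(h)` to `h - 1` in the normal factor,
so the two maps are inverse to each other on generators.
-/

namespace WeakCommutativity

open MonoidAlgebra

variable {H : Type*} [Group H]

section Relations

theorem commute_chiIota_chiPsi (h : H) : Commute (chiIota H h) (chiPsi H h) := by
  have hrel : QuotientGroup.mk' (normalClosure (chiRel H))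
      ⁅(Monoid.Coprod.inl h : Monoid.Coprod H H), Monoid.Coprod.inr h⁆ = 1 :=
    (QuotientGroup.eq_one_iff _).2 (subset_normalClosure ⟨h, rfl⟩)
  rw [map_commutatorElement] at hrel
  exact commutatorElement_eq_one_iff_mul_comm.mp hrel

noncomputable def ell (h : H) : chi H := (chiIota H h)⁻¹ * chiPsi H h

theorem ell_mem_Lsub (h : H) : ell h ∈ Lsub H := subset_closure ⟨h, rfl⟩

theorem ell_one : ell (1 : H) = 1 := by simp [ell]

theorem ell_mul (h g : H) :
    ell (h * g) = (chiIota H g)⁻¹ * ell h * chiIota H g * ell g := by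
  simp only [ell, map_mul, mul_inv_rev]
  group

theorem commute_chiIota_ell (h : H) : Commute (chiIota H h) (ell h) :=
  (Commute.refl _).inv_right.mul_right (commute_chiIota_chiPsi h)

noncomputable def ellAb (h : H) : Additive (Abelianization (Lsub H)) :=
  Additive.ofMul (Abelianization.of ⟨ell h, ell_mem_Lsub h⟩)

theorem ellAb_one : ellAb (1 : H) = 0 := by
  simp only [ellAb, ell_one]
  exact congrArg Additive.ofMul (map_one Abelianization.of)

/-- With `c = g⁻¹ ℓ(h) g ∈ L(H)` one has `ℓ(hg) = c ℓ(g)` and, since `h` commutes with `ℓ(h)`,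
`ℓ(h²g) = c² ℓ(g)`. -/
theorem ellAb_mul_mul_add (h g : H) :
    ellAb (h * (h * g)) + ellAb g = ellAb (h * g) + ellAb (h * g) := by
  set c : chi H := (chiIota H g)⁻¹ * ell h * chiIota H g
  have hc : c ∈ Lsub H := by
    have : c = ell (h * g) * (ell g)⁻¹ := by rw [ell_mul]; simp only [c]; group
    rw [this]
    exact mul_mem (ell_mem_Lsub _) (inv_mem (ell_mem_Lsub _))
  have hhg : ell (h * g) = c * ell g := ell_mul h g
  have hconj : (chiIota H h)⁻¹ * ell h * chiIota H h = ell h := by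
    rw [mul_assoc, ← (commute_chiIota_ell h).eq, inv_mul_cancel_left]
  have hhhg : ell (h * (h * g)) = c * ell (h * g) :=
    calc ell (h * (h * g))
        = (chiIota H g)⁻¹ * ((chiIota H h)⁻¹ * ell h * chiIota H h) * chiIota H g
            * ell (h * g) := by rw [ell_mul h (h * g), map_mul]; group
      _ = c * ell (h * g) := by rw [hconj]
  have e1 : (⟨ell (h * g), ell_mem_Lsub _⟩ : Lsub H) = ⟨c, hc⟩ * ⟨ell g, ell_mem_Lsub _⟩ :=
    Subtype.ext hhg
  have e2 : (⟨ell (h * (h * g)), ell_mem_Lsub _⟩ : Lsub H)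
      = ⟨c, hc⟩ * ⟨ell (h * g), ell_mem_Lsub _⟩ := Subtype.ext hhhg
  simp only [ellAb, e2, e1, map_mul, ← ofMul_mul]
  exact congrArg Additive.ofMul (by ac_rfl)

end Relations

section RingIdentities

variable {k G : Type*} [Ring k] [Group G]

theorem of_mul_sub_one_sq (g h : G) :
    of k G g * (of k G h - 1) ^ 2 = (of k G (g * h * g⁻¹) - 1) ^ 2 * of k G g := by
  have e : of k G g * (of k G h - 1) = (of k G (g * h * g⁻¹) - 1) * of k G g := by
    rw [mul_sub, sub_mul, ← map_mul, ← map_mul, inv_mul_cancel_right, mul_one, one_mul]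
  rw [sq, sq, ← mul_assoc, e, mul_assoc, e]
  exact (mul_assoc _ _ _).symm

theorem sub_one_sq_mul_of (h g : G) :
    (of k G h - 1) ^ 2 * of k G g = of k G (h * (h * g)) - 2 • of k G (h * g) + of k G g := by
  simp only [map_mul]
  noncomm_ring

end RingIdentities

section ToAbelianization

noncomputable def ellAbLinear : MonoidAlgebra ℤ H →ₗ[ℤ] Additive (Abelianization (Lsub H)) :=
  (Finsupp.linearCombination ℤ ellAb).comp (coeffLinearEquiv ℤ).toLinearMap

theorem ellAbLinear_of (h : H) : ellAbLinear (of ℤ H h) = ellAb h := by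
  simp [ellAbLinear, MonoidAlgebra.of_apply]

theorem ellAbLinear_sub_one_sq_mul (h : H) (b : MonoidAlgebra ℤ H) :
    ellAbLinear ((of ℤ H h - 1) ^ 2 * b) = 0 := by
  induction b using MonoidAlgebra.induction_on with
  | of g =>
    rw [sub_one_sq_mul_of, map_add, map_sub, map_nsmul, ellAbLinear_of, ellAbLinear_of,
      ellAbLinear_of, two_nsmul, sub_add_eq_add_sub, ellAb_mul_mul_add, sub_self]
  | add x y hx hy => rw [mul_add, map_add, hx, hy, add_zero]
  | smul n x hx => rw [mul_smul_comm, map_smul, hx, smul_zero]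

theorem ellAbLinear_mul_sub_one_sq_mul (a : MonoidAlgebra ℤ H) (h : H) (b : MonoidAlgebra ℤ H) :
    ellAbLinear (a * (of ℤ H h - 1) ^ 2 * b) = 0 := by
  induction a using MonoidAlgebra.induction_on with
  | of g => rw [of_mul_sub_one_sq, mul_assoc, ellAbLinear_sub_one_sq_mul]
  | add x y hx hy => rw [add_mul, add_mul, map_add, hx, hy, add_zero]
  | smul n x hx => rw [smul_mul_assoc, smul_mul_assoc, map_smul, hx, smul_zero]

theorem ellAbLinear_eq_zero_of_mem_ideal2 {x : MonoidAlgebra ℤ H} (hx : x ∈ ideal2 H) :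
    ellAbLinear x = 0 := by
  suffices ∀ a, ellAbLinear (a * x) = 0 by simpa using this 1
  induction hx using Submodule.span_induction with
  | mem y hy =>
    obtain ⟨h, b, rfl⟩ := hy
    intro a
    rw [← mul_assoc, ellAbLinear_mul_sub_one_sq_mul]
  | zero => simp
  | add y z _ _ hy hz => intro a; rw [mul_add, map_add, hy, hz, add_zero]
  | smul r y _ hy => intro a; rw [smul_eq_mul, ← mul_assoc]; exact hy (a * r)

abbrev AugQuotient (H : Type*) [Group H] : Type _ :=
  ↥(augIdeal H) ⧸ Submodule.comap (augIdeal H).subtype (ideal2 H)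

noncomputable def augSubOne (h : H) : augIdeal H := ⟨of ℤ H h - 1, Ideal.subset_span ⟨h, rfl⟩⟩

noncomputable def augQuotientToAb : AugQuotient H →+ Additive (Abelianization (Lsub H)) :=
  QuotientAddGroup.lift _ (ellAbLinear.toAddMonoidHom.comp (augIdeal H).subtype.toAddMonoidHom)
    fun _ ha => ellAbLinear_eq_zero_of_mem_ideal2 ha

theorem augQuotientToAb_mk_augSubOne (h : H) :
    augQuotientToAb (Submodule.Quotient.mk (augSubOne h)) = ellAb h := by
  have hmk : augQuotientToAb (Submodule.Quotient.mk (augSubOne h))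
      = ellAbLinear (of ℤ H h - 1) := QuotientAddGroup.lift_mk _ _ _
  rw [hmk, map_sub, ellAbLinear_of, ← map_one (of ℤ H), ellAbLinear_of, ellAb_one, sub_zero]

end ToAbelianization

section ToSemidirectProduct

noncomputable def augAction : H →* MulAut (Multiplicative (AugQuotient H)) :=
  (MulAutMultiplicative (AugQuotient H)).symm.toMonoidHom.comp
    ((DistribMulAction.toAddAut (MonoidAlgebra ℤ H)ˣ (AugQuotient H)).comp (of ℤ H).toHomUnits)

theorem augAction_apply (h : H) (q : AugQuotient H) :
    augAction h (Multiplicative.ofAdd q) = Multiplicative.ofAdd (of ℤ H h • q) := rfl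

theorem augSubOne_mul (g h : H) : augSubOne (g * h) = augSubOne g + of ℤ H g • augSubOne h := by
  apply Subtype.ext
  change of ℤ H (g * h) - 1 = (of ℤ H g - 1) + of ℤ H g * (of ℤ H h - 1)
  rw [map_mul]
  noncomm_ring

theorem of_smul_mk_augSubOne (h : H) :
    of ℤ H h • (Submodule.Quotient.mk (augSubOne h) : AugQuotient H)
      = Submodule.Quotient.mk (augSubOne h) := by
  rw [← Submodule.Quotient.mk_smul, Submodule.Quotient.eq]
  change of ℤ H h * (of ℤ H h - 1) - (of ℤ H h - 1) ∈ ideal2 H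
  have e : of ℤ H h * (of ℤ H h - 1) - (of ℤ H h - 1) = (of ℤ H h - 1) ^ 2 * 1 := by noncomm_ring
  rw [e]
  exact Ideal.subset_span ⟨h, 1, rfl⟩

noncomputable def psiHom : H →* Multiplicative (AugQuotient H) ⋊[augAction] H where
  toFun h := ⟨Multiplicative.ofAdd (Submodule.Quotient.mk (augSubOne h)), h⟩
  map_one' := by
    refine SemidirectProduct.ext ?_ rfl
    change Multiplicative.ofAdd (Submodule.Quotient.mk (augSubOne 1)) = Multiplicative.ofAdd 0
    congr 2
    exact Subtype.ext (sub_eq_zero_of_eq (map_one _))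
  map_mul' g h := by
    refine SemidirectProduct.ext ?_ rfl
    rw [SemidirectProduct.mul_left, augAction_apply, augSubOne_mul, Submodule.Quotient.mk_add,
      Submodule.Quotient.mk_smul]
    rfl

theorem commute_inr_psiHom (h : H) : Commute (SemidirectProduct.inr h) (psiHom h) := by
  refine SemidirectProduct.ext ?_ rfl
  change 1 * augAction h (Multiplicative.ofAdd (Submodule.Quotient.mk (augSubOne h)))
    = _ * augAction h 1
  rw [augAction_apply, of_smul_mk_augSubOne, one_mul, map_one, mul_one]
  rfl

noncomputable def chiToSemidirect : chi H →* Multiplicative (AugQuotient H) ⋊[augAction] H :=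
  QuotientGroup.lift _ (Monoid.Coprod.lift SemidirectProduct.inr psiHom) <| by
    refine normalClosure_le_normal ?_
    rintro _ ⟨h, rfl⟩
    rw [SetLike.mem_coe, MonoidHom.mem_ker, map_commutatorElement,
      commutatorElement_eq_one_iff_mul_comm, Monoid.Coprod.lift_apply_inl,
      Monoid.Coprod.lift_apply_inr]
    exact commute_inr_psiHom h

theorem chiToSemidirect_ell (h : H) :
    chiToSemidirect (ell h)
      = SemidirectProduct.inl (Multiplicative.ofAdd (Submodule.Quotient.mk (augSubOne h))) := by
  set n := Multiplicative.ofAdd (Submodule.Quotient.mk (augSubOne h) : AugQuotient H)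
  have hfix : augAction h n = n := by rw [augAction_apply, of_smul_mk_augSubOne]
  have hpsi : chiToSemidirect (chiPsi H h) = SemidirectProduct.inl n * SemidirectProduct.inr h :=
    SemidirectProduct.mk_eq_inl_mul_inr h n
  have hiota : chiToSemidirect (chiIota H h) = SemidirectProduct.inr h := rfl
  rw [ell, map_mul, map_inv, hpsi, hiota, ← map_inv, ← mul_assoc,
    ← SemidirectProduct.inl_aut_inv, MulAut.inv_apply]
  exact congrArg SemidirectProduct.inl ((MulEquiv.symm_apply_eq _).2 hfix.symm)

theorem Lsub_le_ker : Lsub H ≤ (SemidirectProduct.rightHom.comp chiToSemidirect).ker := by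
  refine (closure_le _).2 ?_
  rintro _ ⟨h, rfl⟩
  change SemidirectProduct.rightHom (chiToSemidirect (ell h)) = 1
  rw [chiToSemidirect_ell, SemidirectProduct.rightHom_inl]

noncomputable def lToAugQuotient : Lsub H →* Multiplicative (AugQuotient H) :=
  (MonoidHom.ofInjective SemidirectProduct.inl_injective).symm.toMonoidHom.comp
    ((chiToSemidirect.comp (Lsub H).subtype).codRestrict _ fun x => by
      rw [SemidirectProduct.range_inl_eq_ker_rightHom]
      exact Lsub_le_ker x.2)

theorem lToAugQuotient_ell (h : H) :
    lToAugQuotient ⟨ell h, ell_mem_Lsub h⟩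
      = Multiplicative.ofAdd (Submodule.Quotient.mk (augSubOne h)) := by
  refine (MulEquiv.symm_apply_eq (MonoidHom.ofInjective SemidirectProduct.inl_injective)).2 ?_
  exact Subtype.ext (chiToSemidirect_ell h)

end ToSemidirectProduct

section Generation

theorem mem_closure_of_mem_augIdeal {x : MonoidAlgebra ℤ H} (hx : x ∈ augIdeal H) :
    x ∈ AddSubgroup.closure {y | ∃ h : H, y = of ℤ H h - 1} := by
  set C := AddSubgroup.closure {y : MonoidAlgebra ℤ H | ∃ h : H, y = of ℤ H h - 1}
  have of_mul_mem (g : H) : C ≤ C.comap (AddMonoidHom.mulLeft (of ℤ H g)) := by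
    refine (AddSubgroup.closure_le _).2 ?_
    rintro _ ⟨h, rfl⟩
    have e : of ℤ H g * (of ℤ H h - 1) = (of ℤ H (g * h) - 1) - (of ℤ H g - 1) := by
      rw [map_mul]; noncomm_ring
    change of ℤ H g * (of ℤ H h - 1) ∈ C
    rw [e]
    exact sub_mem (AddSubgroup.subset_closure ⟨_, rfl⟩) (AddSubgroup.subset_closure ⟨_, rfl⟩)
  induction hx using Submodule.span_induction with
  | mem y hy => exact AddSubgroup.subset_closure hy
  | zero => exact zero_mem C
  | add y z _ _ hy hz => exact add_mem hy hz
  | smul r y _ hy =>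
    induction r using MonoidAlgebra.induction_on with
    | of g => exact of_mul_mem g hy
    | add a b ha hb => rw [smul_eq_mul, add_mul]; exact add_mem ha hb
    | smul n a ha => rw [smul_eq_mul, smul_mul_assoc]; exact zsmul_mem ha n

theorem closure_range_mk_augSubOne :
    AddSubgroup.closure
      (Set.range fun h : H => (Submodule.Quotient.mk (augSubOne h) : AugQuotient H)) = ⊤ := by
  refine eq_top_iff.2 fun q _ => ?_
  obtain ⟨a, rfl⟩ := Submodule.Quotient.mk_surjective _ q
  set K := (AddSubgroup.closure (Set.range fun h : H =>
    (Submodule.Quotient.mk (augSubOne h) : AugQuotient H))).comap (Submodule.mkQ _).toAddMonoidHom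
  have hK : AddSubgroup.closure {y | ∃ h : H, y = of ℤ H h - 1}
      ≤ K.map (augIdeal H).subtype.toAddMonoidHom := by
    refine (AddSubgroup.closure_le _).2 ?_
    rintro _ ⟨h, rfl⟩
    exact ⟨augSubOne h, AddSubgroup.subset_closure ⟨h, rfl⟩, rfl⟩
  obtain ⟨b, hb, hba⟩ := hK (mem_closure_of_mem_augIdeal a.2)
  rwa [Subtype.ext hba] at hb

end Generation

noncomputable def abToAugQuotient : Abelianization (Lsub H) →* Multiplicative (AugQuotient H) :=
  Abelianization.lift lToAugQuotient

theorem augQuotientToAb_comp_abToAugQuotient :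
    (AddMonoidHom.toMultiplicativeLeft augQuotientToAb).comp abToAugQuotient
      = MonoidHom.id (Abelianization (Lsub H)) := by
  refine Abelianization.hom_ext _ _ (MonoidHom.eq_of_eqOn_dense closure_closure_coe_preimage ?_)
  rintro ⟨_, hx⟩ ⟨h, rfl⟩
  change Additive.toMul (augQuotientToAb (lToAugQuotient ⟨ell h, hx⟩)) = _
  rw [lToAugQuotient_ell]
  exact augQuotientToAb_mk_augSubOne h

theorem abToAugQuotient_comp_augQuotientToAb :
    abToAugQuotient.comp (AddMonoidHom.toMultiplicativeLeft augQuotientToAb)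
      = MonoidHom.id (Multiplicative (AugQuotient H)) := by
  have hadd : (MonoidHom.toAdditiveLeft abToAugQuotient).comp augQuotientToAb
      = AddMonoidHom.id (AugQuotient H) := by
    refine AddMonoidHom.eq_of_eqOn_dense closure_range_mk_augSubOne ?_
    rintro _ ⟨h, rfl⟩
    change Multiplicative.toAdd (abToAugQuotient (Additive.toMul
      (augQuotientToAb (Submodule.Quotient.mk (augSubOne h))))) = Submodule.Quotient.mk (augSubOne h)
    rw [augQuotientToAb_mk_augSubOne]
    change Multiplicative.toAdd (lToAugQuotient ⟨ell h, ell_mem_Lsub h⟩) = _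
    rw [lToAugQuotient_ell]
    rfl
  exact MonoidHom.ext fun q => DFunLike.congr_fun hadd (Multiplicative.toAdd q)

end WeakCommutativity

/-- For any group H, the abelianization L(H)/L(H)′ is isomorphic to the
additive quotient group A_ℤ(H)/I₂(H). -/
theorem stmt_7 (H : Type*) [Group H] :
    Nonempty
      (Abelianization ↥(Lsub H) ≃*
        Multiplicative
          (↥(augIdeal H) ⧸ Submodule.comap (augIdeal H).subtype (ideal2 H))) :=
  ⟨MonoidHom.toMulEquiv WeakCommutativity.abToAugQuotient
    (AddMonoidHom.toMultiplicativeLeft WeakCommutativity.augQuotientToAb)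
    WeakCommutativity.augQuotientToAb_comp_abToAugQuotient
    WeakCommutativity.abToAugQuotient_comp_augQuotientToAb⟩
end

section
/- Let H be a group generated by a finite set S = {a₁, …, aₙ}. Then the quotient abelian group ℤ(H)/I₂(H) is generated by the images of the elements a_{i₁}a_{i₂}⋯a_{i_s} with 1 ≤ i₁ < i₂ < … < i_s ≤ n (including the empty product 1); in particular, A_ℤ(H)/I₂(H) is a finitely generated abelian group. -/
open MonoidAlgebra

/-!
Modulo `I₂(H)` every `u h = h - 1` squares to zero. Since `(h - 1)² h⁻¹ = u h + u h⁻¹`, we get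
`u h⁻¹ = -u h`, and comparing `u (hk)⁻¹ = u k⁻¹ * u h⁻¹ + u k⁻¹ + u h⁻¹` with `-u (hk)` shows that
the `u h` anticommute. Hence the elements `x i = u (a i)` behave like the generators of an exterior
algebra: the `ℤ`-span of their increasing products is closed under multiplication, so it is a
subring, and it contains every `h` because `h = u h + 1` and `h⁻¹ = 1 - u h`. Expanding
`x i = a i - 1` turns increasing products of the `x i` into `ℤ`-combinations of increasing products
of the `a i`. Finally `A(H) / (A(H) ∩ I₂(H))` embeds into the finitely generated abelian group
`ℤ(H) / I₂(H)`.
-/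

open Submodule

section OrderedProd

variable {ι R : Type*} [LinearOrder ι] [Ring R]

noncomputable def orderedProd (x : ι → R) (s : Finset ι) : R :=
  ((s.sort (· ≤ ·)).map x).prod

@[simp]
theorem orderedProd_empty (x : ι → R) : orderedProd x ∅ = 1 := by
  simp [orderedProd]

theorem orderedProd_insert_of_lt (x : ι → R) {a : ι} {s : Finset ι} (h : ∀ b ∈ s, a < b) :
    orderedProd x (insert a s) = x a * orderedProd x s := by
  rw [orderedProd, Finset.sort_insert _ (fun b hb => (h b hb).le)
    (fun ha => lt_irrefl a (h a ha))]
  simp [orderedProd]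

theorem orderedProd_singleton (x : ι → R) (a : ι) : orderedProd x {a} = x a := by
  simpa using orderedProd_insert_of_lt x (s := ∅) (a := a) (by simp)

theorem mul_mem_span_image_orderedProd {x : ι → R} {a : ι} {T : Set (Finset ι)}
    (hT : ∀ s ∈ T, ∀ b ∈ s, a < b) {r : R} (hr : r ∈ span ℤ (orderedProd x '' T)) :
    x a * r ∈ span ℤ (orderedProd x '' (insert a '' T)) := by
  have hT' : orderedProd x '' (insert a '' T) =
      LinearMap.mulLeft ℤ (x a) '' (orderedProd x '' T) := by
    simp only [Set.image_image]
    exact Set.image_congr fun s hs => orderedProd_insert_of_lt x (hT s hs)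
  rw [hT', ← map_span]
  exact mem_map_of_mem hr

theorem orderedProd_sub_one_mem_span (y : ι → R) (s : Finset ι) :
    orderedProd (fun i => y i - 1) s ∈ span ℤ (orderedProd y '' Set.Iic s) := by
  induction s using Finset.induction_on_min with
  | empty => exact subset_span ⟨∅, Set.self_mem_Iic, by simp⟩
  | insert j s hj ih =>
    rw [orderedProd_insert_of_lt _ hj, sub_mul, one_mul]
    refine sub_mem (span_mono (Set.image_mono ?_) (mul_mem_span_image_orderedProd ?_ ih))
      (span_mono (Set.image_mono (Set.Iic_subset_Iic.mpr (Finset.subset_insert j s))) ih)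
    · rintro _ ⟨s', hs', rfl⟩
      exact Finset.insert_subset_insert j hs'
    · exact fun s' hs' b hb => hj b (hs' hb)

section Anticommuting

variable {x : ι → R} (hsq : ∀ i, x i * x i = 0) (hanti : ∀ i j, x i * x j = -(x j * x i))
include hsq hanti

theorem mul_orderedProd_mem_span (t : ι) (s : Finset ι) :
    x t * orderedProd x s ∈ span ℤ (orderedProd x '' Set.Iic (insert t s)) := by
  induction s using Finset.induction_on_min with
  | empty => exact subset_span ⟨{t}, by simp, by simp [orderedProd_singleton]⟩
  | insert j s hj ih =>
    rw [orderedProd_insert_of_lt x hj]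
    rcases lt_trichotomy t j with htj | rfl | hjt
    · refine subset_span ⟨insert t (insert j s), Set.self_mem_Iic, ?_⟩
      rw [orderedProd_insert_of_lt x, orderedProd_insert_of_lt x hj]
      simpa [htj] using fun b hb => htj.trans (hj b hb)
    · rw [← mul_assoc, hsq, zero_mul]
      exact zero_mem _
    · rw [← mul_assoc, hanti, neg_mul, mul_assoc]
      refine neg_mem (span_mono (Set.image_mono ?_) (mul_mem_span_image_orderedProd ?_ ih))
      · rintro _ ⟨s', hs', rfl⟩
        exact (Finset.insert_subset_insert j hs').trans (by grind)
      · intro s' hs' b hb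
        rcases Finset.mem_insert.mp (hs' hb) with rfl | hb
        exacts [hjt, hj b hb]

theorem mul_mem_span_range_orderedProd {r r' : R} (hr : r ∈ span ℤ (Set.range (orderedProd x)))
    (hr' : r' ∈ span ℤ (Set.range (orderedProd x))) :
    r * r' ∈ span ℤ (Set.range (orderedProd x)) := by
  set W := span ℤ (Set.range (orderedProd x))
  have hleft (t : ι) : W ≤ W.comap (LinearMap.mulLeft ℤ (x t)) := by
    refine span_le.mpr ?_
    rintro _ ⟨s, rfl⟩
    exact span_mono (Set.image_subset_range _ _) (mul_orderedProd_mem_span hsq hanti t s)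
  have hprod (s : Finset ι) : orderedProd x s * r' ∈ W := by
    induction s using Finset.induction_on_min with
    | empty => simpa using hr'
    | insert j s hj ih =>
      rw [orderedProd_insert_of_lt x hj, mul_assoc]
      exact hleft j ih
  have hright : W ≤ W.comap (LinearMap.mulRight ℤ r') := by
    refine span_le.mpr ?_
    rintro _ ⟨s, rfl⟩
    exact hprod s
  exact hright hr

theorem subring_closure_subset_span_orderedProd :
    (Subring.closure (Set.range x) : Set R) ⊆ span ℤ (Set.range (orderedProd x)) := by
  intro r hr
  induction hr using Subring.closure_induction with
  | mem _ hr =>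
    obtain ⟨i, rfl⟩ := hr
    exact subset_span ⟨{i}, orderedProd_singleton x i⟩
  | zero => exact zero_mem _
  | one => exact subset_span ⟨∅, orderedProd_empty x⟩
  | add _ _ _ _ h h' => exact add_mem h h'
  | neg _ _ h => exact neg_mem h
  | mul _ _ _ _ h h' => exact mul_mem_span_range_orderedProd hsq hanti h h'

end Anticommuting

end OrderedProd

section SquareZeroAugmentation

variable {H R : Type*} [Group H] [Ring R] (f : H →* R) (hf : ∀ h, (f h - 1) ^ 2 = 0)
include hf

theorem map_inv_sub_one (h : H) : f h⁻¹ - 1 = -(f h - 1) := by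
  have hinv : f h * f h⁻¹ = 1 := by rw [← map_mul, mul_inv_cancel, map_one]
  have hexp : (f h - 1) ^ 2 * f h⁻¹ = (f h - 1) * (f h * f h⁻¹) - f h * f h⁻¹ + f h⁻¹ := by
    noncomm_ring
  rw [hf, zero_mul, hinv, mul_one] at hexp
  rw [eq_neg_iff_add_eq_zero, hexp]
  abel

theorem sub_one_mul_sub_one_anticomm (h k : H) :
    (f h - 1) * (f k - 1) = -((f k - 1) * (f h - 1)) := by
  have hinv (g : H) : f g⁻¹ = -(f g - 1) + 1 := by rw [← map_inv_sub_one f hf, sub_add_cancel]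
  have hprod := map_inv_sub_one f hf (h * k)
  rw [mul_inv_rev, map_mul, map_mul, hinv, hinv] at hprod
  refine eq_neg_of_add_eq_zero_left ?_
  calc (f h - 1) * (f k - 1) + (f k - 1) * (f h - 1)
      = ((-(f k - 1) + 1) * (-(f h - 1) + 1) - 1) + (f h * f k - 1) := by noncomm_ring
    _ = 0 := by rw [hprod, neg_add_cancel]

theorem map_mem_subring_closure_of_mem_closure {S : Set H} {h : H}
    (hh : h ∈ Subgroup.closure S) : f h ∈ Subring.closure ((fun g => f g - 1) '' S) := by
  induction hh using Subgroup.closure_induction with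
  | mem g hg =>
    rw [← sub_add_cancel (f g) 1]
    exact add_mem (Subring.subset_closure ⟨g, hg, rfl⟩) (one_mem _)
  | one => rw [map_one]; exact one_mem _
  | mul g g' _ _ hg hg' => rw [map_mul]; exact mul_mem hg hg'
  | inv g _ hg =>
    rw [← sub_add_cancel (f g⁻¹) 1, map_inv_sub_one f hf]
    exact add_mem (neg_mem (sub_mem hg (one_mem _))) (one_mem _)

theorem subring_closure_range_subset_span_orderedProd {ι : Type*} [LinearOrder ι] (a : ι → H)
    (hgen : Subgroup.closure (Set.range a) = ⊤) :
    (Subring.closure (Set.range f) : Set R) ⊆ span ℤ (Set.range (orderedProd (f ∘ a))) := by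
  set x : ι → R := fun i => f (a i) - 1
  have hsq (i : ι) : x i * x i = 0 := by rw [← sq, hf]
  have hanti (i j : ι) : x i * x j = -(x j * x i) := sub_one_mul_sub_one_anticomm f hf (a i) (a j)
  have hclosure : Subring.closure (Set.range f) ≤ Subring.closure (Set.range x) := by
    refine Subring.closure_le.mpr ?_
    rintro _ ⟨h, rfl⟩
    have := map_mem_subring_closure_of_mem_closure f hf (hgen ▸ Subgroup.mem_top h)
    rwa [← Set.range_comp] at this
  refine fun r hr => span_le.mpr ?_ (subring_closure_subset_span_orderedProd hsq hanti (hclosure hr))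
  rintro _ ⟨s, rfl⟩
  exact span_mono (Set.image_subset_range _ _) (orderedProd_sub_one_mem_span (f ∘ a) s)

end SquareZeroAugmentation

theorem AddGroup.fg_quotient_comap_subtype {R M : Type*} [Ring R] [AddCommGroup M] [Module R M]
    (A B : Submodule R M) [AddGroup.FG (M ⧸ B)] : AddGroup.FG (A ⧸ B.comap A.subtype) := by
  have : Module.Finite ℤ (M ⧸ B) := Module.Finite.iff_addGroup_fg.mpr ‹_›
  have : IsNoetherian ℤ (M ⧸ B) := isNoetherian_of_isNoetherianRing_of_finite ℤ _
  have hinj : Function.Injective ((B.comap A.subtype).mapQ B A.subtype le_rfl) := by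
    rw [← LinearMap.ker_eq_bot, ker_mapQ, mkQ_map_self]
  exact Module.Finite.iff_addGroup_fg.mp
    (Module.Finite.of_injective (mapQ _ B A.subtype le_rfl).toAddMonoidHom.toIntLinearMap hinj)

theorem ideal2_isTwoSided (H : Type*) [Group H] : (ideal2 H).IsTwoSided where
  mul_mem_of_left {x} c hx := by
    induction hx using span_induction with
    | mem y hy =>
      obtain ⟨h, b, rfl⟩ := hy
      rw [mul_assoc]
      exact Ideal.subset_span ⟨h, b * c, rfl⟩
    | zero => simp
    | add y z _ _ hy hz => rw [add_mul]; exact add_mem hy hz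
    | smul r y _ hy => rw [smul_mul_assoc]; exact Ideal.mul_mem_left _ _ hy

section IntegralGroupRing

variable {H : Type*} [Group H]

-- Not global: that would change the additive structure on `ℤ[H] ⧸ ideal2 H` in `stmt_9`.
attribute [local instance] ideal2_isTwoSided

theorem mk_of_sub_one_sq (h : H) : (Ideal.Quotient.mk (ideal2 H) (of ℤ H h) - 1) ^ 2 = 0 := by
  rw [← map_one (Ideal.Quotient.mk _), ← map_sub, ← map_pow, Ideal.Quotient.eq_zero_iff_mem]
  exact Ideal.subset_span ⟨h, 1, (mul_one _).symm⟩

theorem subring_closure_range_mk_of (I : Ideal (MonoidAlgebra ℤ H)) [I.IsTwoSided] :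
    Subring.closure (Set.range ((Ideal.Quotient.mk I).toMonoidHom.comp
      (of ℤ H))) = ⊤ := by
  rw [eq_top_iff]
  rintro q -
  obtain ⟨r, rfl⟩ := Ideal.Quotient.mk_surjective q
  induction r using MonoidAlgebra.induction_on with
  | of h => exact Subring.subset_closure ⟨h, rfl⟩
  | add r r' hr hr' => rw [map_add]; exact add_mem hr hr'
  | smul c r hr => rw [map_zsmul]; exact zsmul_mem hr c

theorem span_range_orderedProd_mk_of_eq_top {ι : Type*} [LinearOrder ι] (a : ι → H)
    (hgen : Subgroup.closure (Set.range a) = ⊤) :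
    span ℤ (Set.range (orderedProd fun i => Ideal.Quotient.mk (ideal2 H) (of ℤ H (a i)))) = ⊤ := by
  rw [eq_top_iff]
  intro q _
  refine subring_closure_range_subset_span_orderedProd
    ((Ideal.Quotient.mk (ideal2 H)).toMonoidHom.comp (of ℤ H)) mk_of_sub_one_sq a hgen ?_
  rw [subring_closure_range_mk_of]
  exact Subring.mem_top q

theorem addSubgroupClosure_orderedProd_eq_top {ι : Type*} [LinearOrder ι] (a : ι → H)
    (hgen : Subgroup.closure (Set.range a) = ⊤) :
    AddSubgroup.closure {x : MonoidAlgebra ℤ H ⧸ ideal2 H | ∃ s : Finset ι,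
      x = Submodule.Quotient.mk (((s.sort (· ≤ ·)).map fun i => of ℤ H (a i)).prod)} = ⊤ := by
  have hG : {x : MonoidAlgebra ℤ H ⧸ ideal2 H | ∃ s : Finset ι,
      x = Submodule.Quotient.mk (((s.sort (· ≤ ·)).map fun i => of ℤ H (a i)).prod)} =
      Set.range (orderedProd fun i => Ideal.Quotient.mk (ideal2 H) (of ℤ H (a i))) := by
    ext q
    simp only [orderedProd, Set.mem_ofPred_eq, Set.mem_range, eq_comm, Ideal.Quotient.mk_eq_mk,
      map_list_prod, List.map_map]
    rfl
  rw [hG, ← span_int_eq_addSubgroupClosure, span_range_orderedProd_mk_of_eq_top a hgen]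
  rfl

end IntegralGroupRing

/-- If H is generated by a₁, …, aₙ, then the quotient abelian group
ℤ(H)/I₂(H) is generated by the images of the products a_{i₁}⋯a_{i_s} with
strictly increasing indices (including the empty product 1); in particular,
A_ℤ(H)/I₂(H) is a finitely generated abelian group. -/
theorem stmt_9 (H : Type*) [Group H] (n : ℕ) (a : Fin n → H)
    (hgen : Subgroup.closure (Set.range a) = ⊤) :
    AddSubgroup.closure
      {x : MonoidAlgebra ℤ H ⧸ ideal2 H |
        ∃ s : Finset (Fin n),
          x = Submodule.Quotient.mk
            (((s.sort (· ≤ ·)).map fun i => MonoidAlgebra.of ℤ H (a i)).prod)} = ⊤ ∧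
    AddGroup.FG
      (↥(augIdeal H) ⧸ Submodule.comap (augIdeal H).subtype (ideal2 H)) := by
  have hspan := addSubgroupClosure_orderedProd_eq_top a hgen
  have : AddGroup.FG (MonoidAlgebra ℤ H ⧸ ideal2 H) :=
    AddGroup.fg_iff.mpr ⟨_, hspan, (Set.finite_range _).subset fun _ ⟨s, hs⟩ => ⟨s, hs.symm⟩⟩
  exact ⟨hspan, AddGroup.fg_quotient_comap_subtype _ _⟩
end

section
/- Let H be an elementary abelian 2-group of rank k and order n = 2^k. Then the weak commutativity group χ(H) is a finite group of order 2^{n−1}·n. -/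
/-
Write `ℓ h = h⁻¹ h^ψ`, so that `L(H) = ⟨ℓ h⟩`. The identities
`g (ℓ h) g⁻¹ = ℓ (h g⁻¹) (ℓ g⁻¹)⁻¹` and `g^ψ (ℓ h) (g^ψ)⁻¹ = (ℓ g⁻¹)⁻¹ ℓ (h g⁻¹)` hold already
in `H ∗ H^ψ`, so `L(H)` is normal; since `h^ψ ≡ h` modulo `L(H)`, the quotient `χ(H)/L(H)` is an
image of `H`. When `H` has exponent two, the relations `[x, x^ψ] = 1` for `x = g, h, gh` make the
`ℓ h` commuting involutions, and `ℓ 1 = 1`, so `|L(H)| ≤ 2^(n-1)` and `|χ(H)| ≤ 2^(n-1) n`.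

For the lower bound, map `χ(H)` to the wreath product `ℤˣ ≀ H` by `h ↦ h` and `h^ψ ↦ δ h δ⁻¹`,
where `δ : H → ℤˣ` is `-1` at `1` and `1` elsewhere. The image contains `H` and the base elements
`δ · (h • δ)`, which generate all base functions with product `1`; so it contains the kernel of
the product map `ℤˣ ≀ H → ℤˣ`, a subgroup of order `2^(n-1) n`.
-/

open Subgroup
open scoped commutatorElement

section GroupLemmas

variable {G : Type*} [Group G]

theorem Subgroup.conj_mem_closure {s : Set G} {g : G}
    (hg : ∀ x ∈ s, g * x * g⁻¹ ∈ closure s) {y : G} (hy : y ∈ closure s) :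
    g * y * g⁻¹ ∈ closure s :=
  (closure_le ((closure s).comap (MulAut.conj g).toMonoidHom)).2 hg hy

theorem Subgroup.card_iSup_le_prod_card {ι : Type*} [Fintype ι] {K : ι → Subgroup G}
    [∀ i, Finite (K i)] (hcomm : Pairwise fun i j => ∀ x y, x ∈ K i → y ∈ K j → Commute x y) :
    Finite ↥(⨆ i, K i) ∧ Nat.card ↥(⨆ i, K i) ≤ ∏ i, Nat.card (K i) := by
  have hsurj := (noncommPiCoprod hcomm).rangeRestrict_surjective
  rw [← noncommPiCoprod_range (hcomm := hcomm), ← Nat.card_pi]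
  exact ⟨Finite.of_surjective _ hsurj, Nat.card_le_card_of_surjective _ hsurj⟩

theorem commute_mul_mul_of_commute_mul_mul {a b c d : G} (hb : b * b = 1) (hab : Commute a b)
    (hac : Commute a c) (hbd : Commute b d) (hcd : Commute c d)
    (h : Commute (a * b) (c * d)) : Commute (a * c) (b * d) := by
  calc a * c * (b * d) = b * (a * b) * (c * d) * b := by
        rw [hab.eq]; simp only [mul_assoc]; rw [← mul_assoc b b, hb, one_mul, hbd.eq]
    _ = b * (c * d) * (a * b) * b := by rw [mul_assoc b, h.eq, ← mul_assoc]
    _ = b * d * (a * c) := by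
        simp only [mul_assoc]; rw [hb, mul_one, ← mul_assoc c, hcd.eq, mul_assoc, hac.eq]

end GroupLemmas

theorem Pi.mem_closure_mulSingle_of_prod_eq_one {Q : Type*} [Fintype Q] [DecidableEq Q] [One Q]
    {F : Q → ℤˣ} (hF : ∏ x, F x = 1) :
    F ∈ Subgroup.closure (Set.range fun q => Pi.mulSingle 1 (-1) * Pi.mulSingle q (-1)) := by
  have hmem (x : Q) : (Pi.mulSingle 1 (F x) * Pi.mulSingle x (F x) : Q → ℤˣ) ∈
      Subgroup.closure (Set.range fun q => Pi.mulSingle 1 (-1) * Pi.mulSingle q (-1)) := by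
    rcases Int.units_eq_one_or (F x) with h | h <;> rw [h]
    · simp only [Pi.mulSingle_one, mul_one, one_mem]
    · exact subset_closure ⟨x, rfl⟩
  have hsplit : F = ∏ x, (Pi.mulSingle 1 (F x) * Pi.mulSingle x (F x) : Q → ℤˣ) := by
    have h1 : ∏ x, (Pi.mulSingle 1 (F x) : Q → ℤˣ) = 1 := by
      simpa [hF] using (map_prod (MonoidHom.mulSingle (fun _ : Q => ℤˣ) 1) F Finset.univ).symm
    rw [Finset.prod_mul_distrib, h1, one_mul, Finset.univ_prod_mulSingle]
  rw [hsplit]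
  exact prod_mem fun x _ => hmem x

namespace RegularWreathProduct

section Group

variable {D Q : Type*} [Group D] [Group Q]

def base : (Q → D) →* D ≀ᵣ Q where
  toFun F := ⟨F, 1⟩
  map_one' := rfl
  map_mul' F G := by ext <;> simp

@[simp]
theorem left_base (F : Q → D) : (base F).left = F := rfl

@[simp]
theorem right_base (F : Q → D) : (base F).right = 1 := rfl

theorem base_mul_inl (w : D ≀ᵣ Q) : base w.left * inl w.right = w := by ext <;> simp

theorem inl_mul_base_mul_inv (q : Q) (F : Q → D) :
    inl q * base F * (inl q)⁻¹ = base fun x => F (q⁻¹ * x) := by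
  ext <;> simp

end Group

variable {D Q : Type*} [CommGroup D] [Group Q]

theorem commute_inl_conj_base (hD : ∀ d : D, d ^ 2 = 1) {q : Q} (hq : q ^ 2 = 1) (m : Q → D) :
    Commute (inl q) (base m * inl q * (base m)⁻¹) := by
  have hq' : q * q = 1 := by rw [← pow_two, hq]
  have hD' (d : D) : d⁻¹ = d := inv_eq_of_mul_eq_one_right (by rw [← pow_two, hD])
  ext x
  · simp only [mul_left, inv_left, left_base, left_inl, right_base, right_inl, mul_right, inv_right,
      Pi.mul_apply, Pi.inv_apply, Pi.one_apply, inv_one, one_mul, mul_one,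
      inv_eq_of_mul_eq_one_right hq', hD']
    rw [← mul_assoc q, hq', one_mul, mul_comm]
  · simp

variable [Fintype Q]

def leftProd : D ≀ᵣ Q →* D where
  toFun w := ∏ x, w.left x
  map_one' := by simp
  map_mul' a b := by
    simp only [mul_left, Pi.mul_apply, Finset.prod_mul_distrib]
    congr 1
    exact Fintype.prod_equiv (Equiv.mulLeft a.right⁻¹) _ _ fun _ => rfl

theorem card_ker_leftProd_mul [Finite D] :
    Nat.card (leftProd : D ≀ᵣ Q →* D).ker * Nat.card D = Nat.card (D ≀ᵣ Q) := by
  classical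
  have hsurj : Function.Surjective (leftProd : D ≀ᵣ Q →* D) := fun d =>
    ⟨base (Pi.mulSingle 1 d), by simp [leftProd]⟩
  rw [← (leftProd : D ≀ᵣ Q →* D).ker.card_mul_index, index_ker, MonoidHom.range_eq_top.2 hsurj,
    card_top]

end RegularWreathProduct

namespace Chi

variable {H : Type*} [Group H]

theorem commute_chiIota_chiPsi (h : H) : Commute (chiIota H h) (chiPsi H h) := by
  rw [← commutatorElement_eq_one_iff_commute]
  exact (QuotientGroup.eq_one_iff _).2 (subset_normalClosure ⟨h, rfl⟩)

@[elab_as_elim]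
theorem induction_on {motive : chi H → Prop} (x : chi H) (iota : ∀ h, motive (chiIota H h))
    (psi : ∀ h, motive (chiPsi H h)) (mul : ∀ x y, motive x → motive y → motive (x * y)) :
    motive x := by
  obtain ⟨w, rfl⟩ := QuotientGroup.mk_surjective x
  induction w using Monoid.Coprod.induction_on with
  | inl h => exact iota h
  | inr h => exact psi h
  | mul w₁ w₂ h₁ h₂ => exact mul _ _ h₁ h₂

section Lift

variable {G : Type*} [Group G]

noncomputable def lift (f g : H →* G) (hfg : ∀ h, Commute (f h) (g h)) : chi H →* G :=
  QuotientGroup.lift _ (Monoid.Coprod.lift f g) <| normalClosure_le_normal <| by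
    rintro _ ⟨h, rfl⟩
    rw [SetLike.mem_coe, MonoidHom.mem_ker, map_commutatorElement, Monoid.Coprod.lift_apply_inl,
      Monoid.Coprod.lift_apply_inr, commutatorElement_eq_one_iff_commute]
    exact hfg h

@[simp]
theorem lift_chiIota (f g : H →* G) (hfg : ∀ h, Commute (f h) (g h)) (h : H) :
    lift f g hfg (chiIota H h) = f h :=
  Monoid.Coprod.lift_apply_inl f g h

@[simp]
theorem lift_chiPsi (f g : H →* G) (hfg : ∀ h, Commute (f h) (g h)) (h : H) :
    lift f g hfg (chiPsi H h) = g h :=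
  Monoid.Coprod.lift_apply_inr f g h

end Lift

noncomputable def Lgen (H : Type*) [Group H] (h : H) : chi H := (chiIota H h)⁻¹ * chiPsi H h

theorem Lgen_mem (h : H) : Lgen H h ∈ Lsub H := subset_closure ⟨h, rfl⟩

theorem Lgen_one : Lgen H 1 = 1 := by simp [Lgen]

theorem Lsub_eq_iSup_zpowers : Lsub H = ⨆ h, zpowers (Lgen H h) := by
  simp_rw [Lsub, zpowers_eq_closure, ← Subgroup.closure_iUnion]
  congr 1
  ext
  simp [Lgen, eq_comm]

theorem chiIota_conj_Lgen (g h : H) :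
    chiIota H g * Lgen H h * (chiIota H g)⁻¹ = Lgen H (h * g⁻¹) * (Lgen H g⁻¹)⁻¹ := by
  simp only [Lgen, map_mul, map_inv]; group

theorem chiPsi_conj_Lgen (g h : H) :
    chiPsi H g * Lgen H h * (chiPsi H g)⁻¹ = (Lgen H g⁻¹)⁻¹ * Lgen H (h * g⁻¹) := by
  simp only [Lgen, map_mul, map_inv]; group

instance Lsub_normal : (Lsub H).Normal where
  conj_mem n hn g := by
    induction g using induction_on generalizing n with
    | iota g =>
      refine conj_mem_closure ?_ hn
      rintro _ ⟨h, rfl⟩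
      rw [← Lgen, chiIota_conj_Lgen]
      exact mul_mem (Lgen_mem _) (inv_mem (Lgen_mem _))
    | psi g =>
      refine conj_mem_closure ?_ hn
      rintro _ ⟨h, rfl⟩
      rw [← Lgen, chiPsi_conj_Lgen]
      exact mul_mem (inv_mem (Lgen_mem _)) (Lgen_mem _)
    | mul x y hx hy =>
      rw [mul_inv_rev, ← mul_assoc, mul_assoc x, mul_assoc x]
      exact hx _ (hy n hn)

theorem mk_comp_chiIota_surjective :
    Function.Surjective ((QuotientGroup.mk' (Lsub H)).comp (chiIota H)) := by
  rw [← MonoidHom.range_eq_top, eq_top_iff]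
  rintro x -
  obtain ⟨x, rfl⟩ := QuotientGroup.mk'_surjective _ x
  induction x using induction_on with
  | iota h => exact ⟨h, rfl⟩
  | psi h => exact ⟨h, QuotientGroup.eq.2 (Lgen_mem h)⟩
  | mul x y hx hy => rw [map_mul]; exact mul_mem hx hy

theorem Lgen_sq (hH : ∀ h : H, h ^ 2 = 1) (h : H) : Lgen H h ^ 2 = 1 := by
  rw [Lgen, (commute_chiIota_chiPsi h).inv_left.mul_pow, inv_pow, ← map_pow, ← map_pow, hH,
    map_one, map_one, inv_one, one_mul]

theorem Lgen_eq_mul (hH : ∀ h : H, h ^ 2 = 1) (h : H) : Lgen H h = chiIota H h * chiPsi H h := by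
  rw [Lgen, ← map_inv, inv_eq_of_mul_eq_one_right (by rw [← pow_two, hH])]

theorem commute_Lgen (hH : ∀ h : H, h ^ 2 = 1) (g h : H) : Commute (Lgen H g) (Lgen H h) := by
  have hcomm : Commute g h := Commute.of_orderOf_dvd_two (orderOf_dvd_of_pow_eq_one <| hH ·) g h
  rw [Lgen_eq_mul hH, Lgen_eq_mul hH]
  apply commute_mul_mul_of_commute_mul_mul
  · rw [← map_mul, ← pow_two, hH, map_one]
  · exact hcomm.map _
  · exact commute_chiIota_chiPsi g
  · exact commute_chiIota_chiPsi h
  · exact hcomm.map _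
  · simpa only [map_mul] using commute_chiIota_chiPsi (g * h)

theorem finite_Lsub_and_card_le [Finite H] (hH : ∀ h : H, h ^ 2 = 1) :
    Finite (Lsub H) ∧ Nat.card (Lsub H) ≤ 2 ^ (Nat.card H - 1) := by
  classical
  have := Fintype.ofFinite H
  have hord (h : H) : orderOf (Lgen H h) ≤ 2 := orderOf_le_of_pow_eq_one two_pos (Lgen_sq hH h)
  have (h : H) : Finite (zpowers (Lgen H h)) := Nat.finite_of_card_ne_zero <| by
    rw [Nat.card_zpowers]
    exact (isOfFinOrder_iff_pow_eq_one.2 ⟨2, two_pos, Lgen_sq hH h⟩).orderOf_pos.ne'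
  obtain ⟨hfin, hcard⟩ := card_iSup_le_prod_card (K := fun h => zpowers (Lgen H h))
    fun g h _ x y hx hy => by
      obtain ⟨i, rfl⟩ := mem_zpowers_iff.1 hx
      obtain ⟨j, rfl⟩ := mem_zpowers_iff.1 hy
      exact (commute_Lgen hH g h).zpow_zpow i j
  rw [Lsub_eq_iSup_zpowers]
  refine ⟨hfin, hcard.trans ?_⟩
  rw [← Finset.mul_prod_erase _ _ (Finset.mem_univ 1), Lgen_one, zpowers_one_eq_bot, card_bot,
    one_mul, Nat.card_eq_fintype_card, ← Finset.card_univ,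
    ← Finset.card_erase_of_mem (Finset.mem_univ 1)]
  exact Finset.prod_le_pow_card _ _ _ fun h _ => by rw [Nat.card_zpowers]; exact hord h

theorem finite_and_card_chi_le [Finite H] (hH : ∀ h : H, h ^ 2 = 1) :
    Finite (chi H) ∧ Nat.card (chi H) ≤ 2 ^ (Nat.card H - 1) * Nat.card H := by
  obtain ⟨hLfin, hL⟩ := finite_Lsub_and_card_le hH
  have : Finite (chi H ⧸ Lsub H) := Finite.of_surjective _ mk_comp_chiIota_surjective
  have hQ : Nat.card (chi H ⧸ Lsub H) ≤ Nat.card H :=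
    Nat.card_le_card_of_surjective _ mk_comp_chiIota_surjective
  have hcard := card_eq_card_quotient_mul_card_subgroup (Lsub H)
  refine ⟨Nat.finite_of_card_ne_zero ?_, ?_⟩ <;> rw [hcard]
  · exact mul_ne_zero Nat.card_pos.ne' Nat.card_pos.ne'
  · rw [mul_comm]; exact Nat.mul_le_mul hL hQ

section Wreath

open RegularWreathProduct

variable [DecidableEq H]

noncomputable def toWreath (hH : ∀ h : H, h ^ 2 = 1) : chi H →* ℤˣ ≀ᵣ H :=
  lift inl ((MulAut.conj (base (Pi.mulSingle 1 (-1)))).toMonoidHom.comp inl)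
    fun h => commute_inl_conj_base Int.units_sq (hH h) _

variable (hH : ∀ h : H, h ^ 2 = 1)

theorem toWreath_chiIota (h : H) : toWreath hH (chiIota H h) = inl h :=
  lift_chiIota _ _ _ h

theorem toWreath_chiPsi (h : H) :
    toWreath hH (chiPsi H h) =
      base (Pi.mulSingle 1 (-1)) * inl h * (base (Pi.mulSingle 1 (-1)))⁻¹ :=
  lift_chiPsi _ _ _ h

theorem toWreath_chiPsi_mul_inv_chiIota (h : H) :
    toWreath hH (chiPsi H h * (chiIota H h)⁻¹) =
      base (Pi.mulSingle 1 (-1) * Pi.mulSingle h (-1)) := by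
  rw [map_mul, map_inv, toWreath_chiIota, toWreath_chiPsi, mul_assoc, mul_assoc,
    ← mul_assoc (inl h), ← map_inv, inl_mul_base_mul_inv, ← map_mul]
  congr 1
  ext x
  simp [Pi.mulSingle_apply, inv_mul_eq_one, eq_comm]

variable [Fintype H]

theorem ker_leftProd_le_range_toWreath :
    (leftProd : ℤˣ ≀ᵣ H →* ℤˣ).ker ≤ (toWreath hH).range := by
  intro w hw
  rw [← base_mul_inl w]
  refine mul_mem ?_ ⟨chiIota H w.right, toWreath_chiIota hH _⟩
  have hgen : Subgroup.closure (Set.range fun q => Pi.mulSingle 1 (-1) * Pi.mulSingle q (-1)) ≤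
      (toWreath hH).range.comap base := by
    rw [closure_le]
    rintro _ ⟨q, rfl⟩
    exact ⟨_, toWreath_chiPsi_mul_inv_chiIota hH q⟩
  exact hgen (Pi.mem_closure_mulSingle_of_prod_eq_one hw)

theorem le_card_chi (hH : ∀ h : H, h ^ 2 = 1) [Finite (chi H)] :
    2 ^ (Nat.card H - 1) * Nat.card H ≤ Nat.card (chi H) := by
  have hker := card_ker_leftProd_mul (D := ℤˣ) (Q := H)
  have htwo : 2 ^ Nat.card H = 2 ^ (Nat.card H - 1) * 2 := by
    rw [← pow_succ, Nat.sub_add_cancel Nat.card_pos]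
  rw [RegularWreathProduct.card, Nat.card_eq_fintype_card (α := ℤˣ), Fintype.card_units_int, htwo,
    mul_right_comm] at hker
  calc 2 ^ (Nat.card H - 1) * Nat.card H = Nat.card (leftProd : ℤˣ ≀ᵣ H →* ℤˣ).ker :=
        (Nat.eq_of_mul_eq_mul_right two_pos hker).symm
    _ ≤ Nat.card (toWreath hH).range := card_le_of_le (ker_leftProd_le_range_toWreath hH)
    _ ≤ Nat.card (chi H) := Nat.card_le_card_of_surjective _ (toWreath hH).rangeRestrict_surjective

end Wreath

end Chi

/-- If H is an elementary abelian 2-group of rank k and order n = 2^k, then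
χ(H) is finite of order 2^{n-1}·n. -/
theorem stmt_15 (H : Type*) [Group H] (k : ℕ)
    (hH : Nonempty (H ≃* (Fin k → Multiplicative (ZMod 2)))) :
    Finite (chi H) ∧ Nat.card (chi H) = 2 ^ (2 ^ k - 1) * 2 ^ k := by
  classical
  obtain ⟨e⟩ := hH
  have : Fintype H := Fintype.ofEquiv _ e.symm.toEquiv
  have hsq (h : H) : h ^ 2 = 1 := e.injective <| by
    rw [map_pow, map_one]
    funext i
    rw [Pi.pow_apply, Pi.one_apply]
    generalize e h i = x
    revert x
    decide
  have hcard : Nat.card H = 2 ^ k := by rw [Nat.card_congr e.toEquiv]; simp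
  obtain ⟨hfin, hle⟩ := Chi.finite_and_card_chi_le hsq
  rw [← hcard]
  exact ⟨hfin, hle.antisymm (Chi.le_card_chi hsq)⟩
end

section
/- Let H be a group admitting a surjective homomorphism onto an elementary abelian 2-group of rank at least 3. Then the subgroup R(H) of χ(H) is nontrivial. -/
open Subgroup
open scoped commutatorElement

/-!
A pair of homomorphisms `α β : H →* G` such that `α h` commutes with `β h` for every `h` factors
through `χ(H)`, sending `h ↦ α h` and `h^ψ ↦ β h`. Hence `R(H) ≠ 1` as soon as some
`⁅⁅α a, (α b)⁻¹ * β b⁆, β c⁆` is nontrivial. If `H` maps onto `(ℤ/2)^k` with `k ≥ 3`, it maps onto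
`(ℤ/2)³`, and there are two homomorphisms `(ℤ/2)³ → Perm (Fin 32)`, each sending the standard
basis to three commuting involutions, that commute pointwise but have a nontrivial such triple
commutator; these finitely many facts are checked by computation.
-/

section WeakCommutativity

variable {H G : Type*} [Group H] [Group G]

noncomputable def chiLift (α β : H →* G) (hαβ : ∀ h, Commute (α h) (β h)) : chi H →* G :=
  QuotientGroup.lift _ (Monoid.Coprod.lift α β) <| normalClosure_le_normal <| by
    rintro _ ⟨h, rfl⟩
    simpa [commutatorElement_eq_one_iff_commute] using hαβ h

@[simp]
theorem chiLift_chiIota (α β : H →* G) (hαβ : ∀ h, Commute (α h) (β h)) (h : H) :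
    chiLift α β hαβ (chiIota H h) = α h :=
  Monoid.Coprod.lift_apply_inl α β h

@[simp]
theorem chiLift_chiPsi (α β : H →* G) (hαβ : ∀ h, Commute (α h) (β h)) (h : H) :
    chiLift α β hαβ (chiPsi H h) = β h :=
  Monoid.Coprod.lift_apply_inr α β h

theorem commutatorElement_mem_Rsub (a b c : H) :
    ⁅⁅chiIota H a, (chiIota H b)⁻¹ * chiPsi H b⁆, chiPsi H c⁆ ∈ Rsub H :=
  commutator_mem_commutator
    (commutator_mem_commutator ⟨a, rfl⟩ (subset_closure ⟨b, rfl⟩)) ⟨c, rfl⟩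

theorem Rsub_ne_bot_of_commute (α β : H →* G) (hαβ : ∀ h, Commute (α h) (β h)) {a b c : H}
    (habc : ⁅⁅α a, (α b)⁻¹ * β b⁆, β c⁆ ≠ 1) : Rsub H ≠ ⊥ := by
  intro hR
  have hw := commutatorElement_mem_Rsub a b c
  rw [hR, mem_bot] at hw
  apply habc
  simpa using congrArg (chiLift α β hαβ) hw

end WeakCommutativity

section ElementaryAbelian

variable {G : Type*} [Group G] {n : ℕ} [NeZero n]

def zmodPowHom (g : G) (hg : g ^ n = 1) : Multiplicative (ZMod n) →* G where
  toFun x := g ^ (Multiplicative.toAdd x).val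
  map_one' := by simp
  map_mul' x y := by simp only [toAdd_mul, ZMod.val_add, ← pow_eq_pow_mod _ hg, ← pow_add]

def piZModPowHom {ι : Type*} [Fintype ι] (g : ι → G) (hg : ∀ i, g i ^ n = 1)
    (hcomm : Pairwise fun i j => Commute (g i) (g j)) : (ι → Multiplicative (ZMod n)) →* G :=
  MonoidHom.noncommPiCoprod (fun i => zmodPowHom (g i) (hg i))
    fun _ _ hij _ _ => (hcomm hij).pow_pow _ _

@[simp]
theorem piZModPowHom_mulSingle {ι : Type*} [Fintype ι] [DecidableEq ι] (g : ι → G)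
    (hg : ∀ i, g i ^ n = 1) (hcomm : Pairwise fun i j => Commute (g i) (g j)) (i : ι)
    (x : Multiplicative (ZMod n)) :
    piZModPowHom g hg hcomm (Pi.mulSingle i x) = g i ^ (Multiplicative.toAdd x).val :=
  MonoidHom.noncommPiCoprod_mulSingle (ϕ := fun i => zmodPowHom (g i) (hg i)) i x

def piRestrictHom {k m : ℕ} (hmk : m ≤ k) (M : Type*) [Monoid M] : (Fin k → M) →* (Fin m → M) :=
  MonoidHom.pi fun i => Pi.evalMonoidHom (fun _ => M) (Fin.castLE hmk i)

theorem piRestrictHom_surjective {k m : ℕ} (hmk : m ≤ k) (M : Type*) [Monoid M] :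
    Function.Surjective (piRestrictHom hmk M) :=
  (Fin.castLE_injective hmk).surjective_comp_right

end ElementaryAbelian

namespace WeakCommutativityModel

/- Found by coset enumeration in `χ((ℤ/2)³)`. -/
def a : Fin 3 → Equiv.Perm (Fin 32) :=
  ![Function.Involutive.toPerm ![0, 1, 6, 3, 12, 11, 2, 15, 8, 9, 20, 5, 4, 24, 23, 7,
      27, 26, 18, 19, 10, 29, 30, 14, 13, 31, 17, 16, 28, 21, 22, 25]
      (fun x => by revert x; decide),
    Function.Involutive.toPerm ![0, 1, 7, 8, 4, 14, 15, 2, 3, 18, 20, 23, 12, 13, 5, 6,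
      26, 27, 9, 19, 10, 31, 30, 11, 24, 29, 16, 17, 28, 25, 22, 21]
      (fun x => by revert x; decide),
    Function.Involutive.toPerm ![1, 0, 5, 9, 13, 2, 11, 14, 18, 3, 22, 6, 24, 4, 7, 23,
      21, 25, 8, 28, 30, 16, 10, 15, 12, 17, 31, 29, 19, 27, 20, 26]
      (fun x => by revert x; decide)]

def b : Fin 3 → Equiv.Perm (Fin 32) :=
  ![Function.Involutive.toPerm ![0, 3, 2, 1, 10, 11, 6, 17, 19, 9, 4, 5, 20, 24, 23, 26,
      16, 7, 18, 8, 12, 29, 30, 14, 13, 31, 15, 27, 28, 21, 22, 25]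
      (fun x => by revert x; decide),
    Function.Involutive.toPerm ![0, 4, 2, 10, 1, 14, 16, 7, 20, 18, 3, 23, 19, 13, 5, 26,
      6, 17, 9, 12, 8, 31, 30, 11, 24, 29, 15, 27, 28, 25, 22, 21]
      (fun x => by revert x; decide),
    Function.Involutive.toPerm ![2, 5, 0, 11, 14, 1, 9, 13, 21, 6, 23, 3, 25, 7, 4, 22,
      18, 24, 16, 29, 31, 8, 15, 10, 17, 12, 30, 28, 27, 19, 26, 20]
      (fun x => by revert x; decide)]

theorem a_sq : ∀ i, a i ^ 2 = 1 := by decide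

theorem b_sq : ∀ i, b i ^ 2 = 1 := by decide

theorem pairwise_commute_a : Pairwise fun i j => Commute (a i) (a j) :=
  fun i j _ => (by decide : ∀ i j, a i * a j = a j * a i) i j

theorem pairwise_commute_b : Pairwise fun i j => Commute (b i) (b j) :=
  fun i j _ => (by decide : ∀ i j, b i * b j = b j * b i) i j

def α : (Fin 3 → Multiplicative (ZMod 2)) →* Equiv.Perm (Fin 32) :=
  piZModPowHom a a_sq pairwise_commute_a

def β : (Fin 3 → Multiplicative (ZMod 2)) →* Equiv.Perm (Fin 32) :=
  piZModPowHom b b_sq pairwise_commute_b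

theorem commute_α_β (v : Fin 3 → Multiplicative (ZMod 2)) : Commute (α v) (β v) :=
  (by decide : ∀ v, α v * β v = β v * α v) v

theorem exists_commutatorElement_ne_one :
    ∃ x y z, ⁅⁅α x, (α y)⁻¹ * β y⁆, β z⁆ ≠ 1 :=
  ⟨Pi.mulSingle 0 (.ofAdd 1), Pi.mulSingle 1 (.ofAdd 1), Pi.mulSingle 2 (.ofAdd 1), by
    simp only [α, β, piZModPowHom_mulSingle]
    decide⟩

end WeakCommutativityModel

open WeakCommutativityModel in
/-- If H maps onto an elementary abelian 2-group of rank k ≥ 3, then R(H) is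
nontrivial. -/
theorem stmt_17 (H : Type*) [Group H] (k : ℕ) (hk : 3 ≤ k)
    (φ : H →* (Fin k → Multiplicative (ZMod 2)))
    (hφ : Function.Surjective φ) :
    Rsub H ≠ ⊥ := by
  set ρ := (piRestrictHom hk (Multiplicative (ZMod 2))).comp φ
  have hρ : Function.Surjective ρ := (piRestrictHom_surjective hk _).comp hφ
  obtain ⟨x, y, z, hxyz⟩ := exists_commutatorElement_ne_one
  obtain ⟨a, rfl⟩ := hρ x
  obtain ⟨b, rfl⟩ := hρ y
  obtain ⟨c, rfl⟩ := hρ z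
  exact Rsub_ne_bot_of_commute (α.comp ρ) (β.comp ρ) (fun h => commute_α_β (ρ h)) hxyz
end

section
/- Let H be a metacyclic group, i.e. a group possessing a cyclic normal subgroup N such that the quotient H/N is cyclic. Then the subgroup R(H) of χ(H) is trivial. -/
open Subgroup
open scoped commutatorElement

/-!
Let `f g : H →* G` be homomorphisms whose ranges generate `G` and such that `f h` commutes with
`g h` for every `h` (the embeddings of `H` and `H^ψ` in `χ(H)`), and let `ℓ h = (f h)⁻¹ * g h`, so
that `L = ⟨ℓ H⟩`. Choose `a` generating `N` and `b` generating `H ⧸ N`; then `H = ⟨a, b⟩`,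
`b a b⁻¹ = a ^ m` and `b⁻¹ a b = a ^ n`.

The commutator `d = ⁅f a, g b⁆` commutes with `f a` and `g a`, equals `⁅g a, f b⁆`, and
conjugation by `f b` and by `g b` both send it to `d ^ m`. Hence `f h` and `g h` act in the same
way on the normal subgroup `⟨d⟩`, so `ℓ h` centralizes `d`; consequently every `⁅f x, g w⁆`
centralizes `L`, and this makes `P = L ⊓ C_G(g H)` normal. As `P` is normal, `⁅f H, L⁆ ≤ P`
follows once `⁅f s, ℓ t⁆ ∈ P` for `s, t ∈ {a, b}`; the two nontrivial cases are
`(f a) ^ (1 - n) * d ^ n` and `(f a) ^ (1 - m) * d⁻¹`, which commute with `g a` and `g b` by a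
direct computation. Hence `⁅⁅f H, L⁆, g H⁆ = 1`.
-/

namespace WeakCommutativity

section Commutators

variable {G : Type*} [Group G] {x y : G}

theorem commutatorElement_mul_right_of_commute (h : Commute x y) (z : G) :
    ⁅x, z * y⁆ = ⁅x, z⁆ := by
  rw [commutatorElement_mul_right_eq_mul_conj, h.commutator_eq]; group

theorem commutatorElement_mul_right_eq_conj_of_commute (h : Commute x y) (z : G) :
    ⁅x, y * z⁆ = y * ⁅x, z⁆ * y⁻¹ := by
  rw [commutatorElement_mul_right_eq_mul_conj, h.commutator_eq, one_mul]

theorem commutatorElement_mul_left_of_commute (h : Commute y z) (x : G) :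
    ⁅x * y, z⁆ = ⁅x, z⁆ := by
  rw [commutatorElement_mul_left_eq_conj_mul, h.commutator_eq]; group

theorem commutatorElement_zpow_left_of_commute (h : Commute ⁅x, y⁆ x) (i : ℤ) :
    ⁅x ^ i, y⁆ = ⁅x, y⁆ ^ i := by
  have hinv : ⁅x⁻¹, y⁆ = ⁅x, y⁆⁻¹ := by
    rw [commutatorElement_inv_left, ← commutatorElement_inv, mul_assoc, h.inv_left.eq,
      inv_mul_cancel_left]
  induction i using Int.induction_on with
  | zero => simp
  | succ i ih =>
    rw [zpow_add_one, commutatorElement_mul_left_eq_conj_mul, ih, (h.zpow_right i).symm.eq]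
    generalize ⁅x, y⁆ = c
    group
  | pred i ih =>
    rw [zpow_sub_one, commutatorElement_mul_left_eq_conj_mul, hinv, ih,
      (h.inv_left.zpow_right _).symm.eq]
    generalize ⁅x, y⁆ = c
    group

end Commutators

section Generation

variable {G H : Type*} [Group G] [Group H]

theorem conj_mem_closure {S : Set G} {u : G} (h : ∀ s ∈ S, u * s * u⁻¹ ∈ closure S) {x : G}
    (hx : x ∈ closure S) : u * x * u⁻¹ ∈ closure S :=
  (closure_le ((closure S).comap (MulAut.conj u).toMonoidHom)).2 h hx

theorem normal_of_conj_mem {T : Set G} (hT : closure T = ⊤) {K : Subgroup G}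
    (h : ∀ t ∈ T, ∀ x ∈ K, t * x * t⁻¹ ∈ K ∧ t⁻¹ * x * t ∈ K) : K.Normal := by
  rw [← normalizer_eq_top_iff, eq_top_iff, ← hT, closure_le]
  refine fun t ht x => ⟨fun hx => (h t ht x hx).1, fun hx => ?_⟩
  simpa [mul_assoc] using (h t ht _ hx).2

theorem closure_image_union_image_eq_top {f g : H →* G}
    (htop : closure (Set.range f ∪ Set.range g) = ⊤) {S : Set H} (hS : closure S = ⊤) :
    closure (f '' S ∪ g '' S) = ⊤ := by
  rw [Subgroup.closure_union, ← MonoidHom.map_closure, ← MonoidHom.map_closure, hS,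
    ← MonoidHom.range_eq_map, ← MonoidHom.range_eq_map, eq_top_iff, ← htop, closure_le]
  rintro _ (⟨k, rfl⟩ | ⟨k, rfl⟩)
  · exact mem_sup_left ⟨k, rfl⟩
  · exact mem_sup_right ⟨k, rfl⟩

theorem commute_apply_of_generators {S : Set H} (hS : closure S = ⊤) (φ : H →* G) (c : G)
    (h : ∀ s ∈ S, Commute (φ s) c) (x : H) : Commute (φ x) c := by
  have : closure S ≤ (centralizer {c}).comap φ :=
    (closure_le _).2 fun s hs => mem_centralizer_singleton_iff.2 (h s hs).eq
  exact mem_centralizer_singleton_iff.1 (this (hS ▸ mem_top x))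

theorem commute_apply_apply_of_generators {Q : Type*} [Group Q] {S : Set H}
    (hS : closure S = ⊤) {φ ψ : H →* Q} (h : ∀ s ∈ S, ∀ t ∈ S, Commute (φ s) (ψ t)) (x y : H) :
    Commute (φ x) (ψ y) :=
  (commute_apply_of_generators hS ψ (φ x) (fun t ht =>
    (commute_apply_of_generators hS φ (ψ t) (fun s hs => h s hs t ht) x).symm) y).symm

theorem commutatorElement_mem_iff_commute {P : Subgroup G} [P.Normal] {u v : G} :
    ⁅u, v⁆ ∈ P ↔ Commute (u : G ⧸ P) (v : G ⧸ P) := by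
  rw [← commutatorElement_eq_one_iff_commute, ← QuotientGroup.eq_one_iff]; rfl

theorem conj_mem_zpowers {u d : G} {k : ℤ} (h : u * d * u⁻¹ = d ^ k) {x : G}
    (hx : x ∈ zpowers d) : u * x * u⁻¹ ∈ zpowers d := by
  obtain ⟨i, rfl⟩ := mem_zpowers_iff.1 hx
  rw [← conj_zpow, h, ← zpow_mul]
  exact zpow_mem (mem_zpowers d) _

end Generation

section Pair

variable {G H : Type*} [Group G] [Group H] (f g : H →* G)

def lgen (h : H) : G := (f h)⁻¹ * g h

-- The same set as in `Lsub`, so that `Lsub H` is `lsub (chiIota H) (chiPsi H)` by definition.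
def lsub : Subgroup G := closure {x | ∃ h : H, x = lgen f g h}

theorem lgen_mem_lsub (h : H) : lgen f g h ∈ lsub f g := subset_closure ⟨h, rfl⟩

theorem lgen_mul (x y : H) : lgen f g (x * y) = (f y)⁻¹ * lgen f g x * f y * lgen f g y := by
  simp only [lgen, map_mul]; group

theorem lgen_inv (x : H) : lgen f g x⁻¹ = f x * (lgen f g x)⁻¹ * (f x)⁻¹ := by
  simp only [lgen, map_inv]; group

theorem conj_f_lgen (k h : H) :
    f k * lgen f g h * (f k)⁻¹ = lgen f g (h * k⁻¹) * (lgen f g k⁻¹)⁻¹ := by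
  simp only [lgen, map_mul, map_inv]; group

theorem conj_g_lgen (k h : H) :
    g k * lgen f g h * (g k)⁻¹ = (lgen f g k⁻¹)⁻¹ * lgen f g (h * k⁻¹) := by
  simp only [lgen, map_mul, map_inv]; group

theorem normal_of_conj_apply_mem (htop : closure (Set.range f ∪ Set.range g) = ⊤)
    {K : Subgroup G} (h : ∀ k, ∀ x ∈ K, f k * x * (f k)⁻¹ ∈ K ∧ g k * x * (g k)⁻¹ ∈ K) :
    K.Normal := by
  refine normal_of_conj_mem htop fun t ht x hx => ?_
  rcases ht with ⟨k, rfl⟩ | ⟨k, rfl⟩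
  · exact ⟨(h k x hx).1, by simpa using (h k⁻¹ x hx).1⟩
  · exact ⟨(h k x hx).2, by simpa using (h k⁻¹ x hx).2⟩

theorem lsub_normal (htop : closure (Set.range f ∪ Set.range g) = ⊤) : (lsub f g).Normal :=
  normal_of_conj_apply_mem f g htop fun k x hx =>
    ⟨conj_mem_closure (by
        rintro _ ⟨h, rfl⟩
        rw [conj_f_lgen]
        exact mul_mem (lgen_mem_lsub f g _) (inv_mem (lgen_mem_lsub f g _))) hx,
      conj_mem_closure (by
        rintro _ ⟨h, rfl⟩
        rw [conj_g_lgen]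
        exact mul_mem (inv_mem (lgen_mem_lsub f g _)) (lgen_mem_lsub f g _)) hx⟩

theorem commutatorElement_mem_lsub (htop : closure (Set.range f ∪ Set.range g) = ⊤) (x : G)
    (h : H) : ⁅x, lgen f g h⁆ ∈ lsub f g := by
  rw [commutatorElement_def]
  exact mul_mem ((lsub_normal f g htop).conj_mem _ (lgen_mem_lsub f g h) x)
    (inv_mem (lgen_mem_lsub f g h))

theorem lsub_inf_centralizer_normal (htop : closure (Set.range f ∪ Set.range g) = ⊤)
    (hD : ∀ x w, ⁅f x, g w⁆ ∈ centralizer (lsub f g : Set G)) :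
    (lsub f g ⊓ centralizer (Set.range g)).Normal := by
  have hL := lsub_normal f g htop
  refine normal_of_conj_apply_mem f g htop fun k z ⟨hzL, hzC⟩ => ?_
  have hcomm (w : H) : Commute z (g w) := (mem_centralizer_iff.1 hzC _ ⟨w, rfl⟩).symm
  have hconj {u v : G} (huv : Commute z (u⁻¹ * v * u)) : v * (u * z * u⁻¹) = u * z * u⁻¹ * v := by
    have := ((Commute.conj_iff u).2 huv).symm
    rwa [show u * (u⁻¹ * v * u) * u⁻¹ = v by group] at this
  refine ⟨⟨hL.conj_mem z hzL _, mem_centralizer_iff.2 ?_⟩,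
    ⟨hL.conj_mem z hzL _, mem_centralizer_iff.2 ?_⟩⟩ <;> rintro _ ⟨w, rfl⟩ <;> apply hconj
  -- conjugating `g w` by `f k` changes it by an element of `⁅f H, g H⁆`, which centralizes `lsub`
  · rw [show (f k)⁻¹ * g w * f k = g w * ⁅f k⁻¹, g w⁻¹⁆⁻¹ by
      simp only [commutatorElement_def, map_inv]; group]
    exact (hcomm w).mul_right
      (show Commute z _ from mem_centralizer_iff.1 (hD _ _) z hzL).inv_right
  · rw [← map_inv, ← map_mul, ← map_mul]
    exact hcomm _

theorem commute_lgen_of_conj_eq {K : Subgroup G} [K.Normal] {S : Set H} (hS : closure S = ⊤)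
    (h : ∀ s ∈ S, ∀ x ∈ K, f s * x * (f s)⁻¹ = g s * x * (g s)⁻¹) {x : G} (hx : x ∈ K) (k : H) :
    Commute x (lgen f g k) := by
  have heq : (MulAut.conjNormal (H := K)).comp f = MulAut.conjNormal.comp g :=
    MonoidHom.eq_of_eqOn_dense hS fun s hs => by
      ext y; simp [MulAut.conjNormal_apply, h s hs y y.2]
  have hk := congrArg (fun φ => ((φ k) ⟨x, hx⟩ : G)) heq
  simp only [MonoidHom.comp_apply, MulAut.conjNormal_apply] at hk
  calc x * ((f k)⁻¹ * g k) = (f k)⁻¹ * (f k * x * (f k)⁻¹) * g k := by group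
    _ = (f k)⁻¹ * (g k * x * (g k)⁻¹) * g k := by rw [hk]
    _ = (f k)⁻¹ * g k * x := by group

theorem commute_f_lgen (hc : ∀ h, Commute (f h) (g h)) (h : H) : Commute (f h) (lgen f g h) :=
  (Commute.refl _).inv_right.mul_right (hc h)

theorem commute_f_lgen_of_generators {S : Set H} (hS : closure S = ⊤)
    (h : ∀ s ∈ S, ∀ t ∈ S, Commute (f s) (lgen f g t)) (x y : H) :
    Commute (f x) (lgen f g y) := by
  have hy : y ∈ closure S := hS ▸ mem_top y
  induction hy using closure_induction generalizing x with
  | mem t ht => exact commute_apply_of_generators hS f _ (fun s hs => h s hs t ht) x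
  | one => simp [lgen]
  | mul y k _ _ ihy ihk =>
    rw [lgen_mul]
    refine Commute.mul_right ?_ (ihk x)
    have := (Commute.conj_iff (f k)⁻¹).2 (ihy (k * x * k⁻¹))
    rwa [inv_inv, map_mul, map_mul, map_inv,
      show (f k)⁻¹ * (f k * f x * (f k)⁻¹) * f k = f x by group] at this
  | inv y _ ih =>
    rw [lgen_inv]
    convert (Commute.conj_iff (f y)).2 (ih (y⁻¹ * x * y)).inv_right using 1
    simp only [map_mul, map_inv]; group

theorem commutator_range_lsub_le {P : Subgroup G} [P.Normal] {S : Set H} (hS : closure S = ⊤)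
    (h : ∀ s ∈ S, ∀ t ∈ S, ⁅f s, lgen f g t⁆ ∈ P) : ⁅f.range, lsub f g⁆ ≤ P := by
  let π := QuotientGroup.mk' P
  have hπ (t : H) : lgen (π.comp f) (π.comp g) t = π (lgen f g t) := by simp [lgen]
  have key := commute_f_lgen_of_generators (π.comp f) (π.comp g) hS fun s hs t ht => by
    rw [hπ]; exact commutatorElement_mem_iff_commute.1 (h s hs t ht)
  rw [commutator_le]
  rintro _ ⟨x, rfl⟩ v hv
  refine commutatorElement_mem_iff_commute.2 ?_
  induction hv using closure_induction with
  | mem v hv =>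
    obtain ⟨t, rfl⟩ := hv
    have := key x t
    rwa [hπ] at this
  | one => exact Commute.one_right _
  | mul v w _ _ ihv ihw => exact ihv.mul_right ihw
  | inv v _ ihv => exact ihv.inv_right

end Pair

section Metacyclic

variable {G H : Type*} [Group G] [Group H] {f g : H →* G} {a b : H} {m n : ℤ}

theorem commute_commutatorElement_g (hc : ∀ h, Commute (f h) (g h)) (hn : b⁻¹ * a * b = a ^ n) :
    Commute ⁅f a, g b⁆ (g a) := by
  have h := congrArg (fun z => ⁅f a, g z⁆) (show a * b = b * a ^ n by rw [← hn]; group)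
  simp only [map_mul, map_zpow] at h
  rw [commutatorElement_mul_right_eq_conj_of_commute (hc a),
    commutatorElement_mul_right_of_commute ((hc a).zpow_right n)] at h
  exact (mul_inv_eq_iff_eq_mul.1 h).symm

theorem commutatorElement_g_f_eq (hc : ∀ h, Commute (f h) (g h)) (hn : b⁻¹ * a * b = a ^ n) :
    ⁅g a, f b⁆ = ⁅f a, g b⁆ := by
  have hg := commute_commutatorElement_g hc hn
  have hf := commute_commutatorElement_g (fun h => (hc h).symm) hn
  have h := (hc (a * b)).symm.commutator_eq
  rw [map_mul, map_mul, commutatorElement_mul_right_eq_mul_conj,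
    commutatorElement_mul_left_eq_conj_mul, (hc a).symm.commutator_eq, mul_one,
    commutatorElement_mul_left_of_commute (hc b).symm, ← commutatorElement_inv (f a) (g b)] at h
  have key : (g a * ⁅f a, g b⁆⁻¹ * (g a)⁻¹) * (f a * ⁅g a, f b⁆ * (f a)⁻¹) = 1 := by
    rw [← h]; group
  rw [hg.symm.inv_right.mul_inv_cancel, hf.symm.mul_inv_cancel] at key
  exact (inv_mul_eq_one.1 key).symm

theorem commute_commutatorElement_f (hc : ∀ h, Commute (f h) (g h)) (hn : b⁻¹ * a * b = a ^ n) :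
    Commute ⁅f a, g b⁆ (f a) := by
  rw [← commutatorElement_g_f_eq hc hn]
  exact commute_commutatorElement_g (fun h => (hc h).symm) hn

theorem conj_commutatorElement_f (hc : ∀ h, Commute (f h) (g h)) (hn : b⁻¹ * a * b = a ^ n)
    {j k : ℤ} (hj : b ^ j * a * (b ^ j)⁻¹ = a ^ k) :
    f (b ^ j) * ⁅f a, g b⁆ * (f (b ^ j))⁻¹ = ⁅f a, g b⁆ ^ k := by
  have hfa : f (b ^ j) * f a * (f (b ^ j))⁻¹ = f a ^ k := by
    rw [← map_inv, ← map_mul, ← map_mul, hj, map_zpow]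
  have hgb : f (b ^ j) * g b * (f (b ^ j))⁻¹ = g b := by
    rw [map_zpow]; exact ((hc b).zpow_left j).mul_inv_cancel
  rw [conjugate_commutatorElement, hfa, hgb,
    commutatorElement_zpow_left_of_commute (commute_commutatorElement_f hc hn)]

theorem conj_commutatorElement_g (hc : ∀ h, Commute (f h) (g h)) (hn : b⁻¹ * a * b = a ^ n)
    {j k : ℤ} (hj : b ^ j * a * (b ^ j)⁻¹ = a ^ k) :
    g (b ^ j) * ⁅f a, g b⁆ * (g (b ^ j))⁻¹ = ⁅f a, g b⁆ ^ k := by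
  rw [← commutatorElement_g_f_eq hc hn]
  exact conj_commutatorElement_f (fun h => (hc h).symm) hn hj

theorem commutatorElement_zpow_eq_self (hc : ∀ h, Commute (f h) (g h)) (hn : b⁻¹ * a * b = a ^ n)
    {k : ℤ} (hk : a ^ k = a) : ⁅f a, g b⁆ ^ k = ⁅f a, g b⁆ := by
  rw [← commutatorElement_zpow_left_of_commute (commute_commutatorElement_f hc hn), ← map_zpow,
    hk]

theorem conj_b_commutatorElement (hc : ∀ h, Commute (f h) (g h)) (hm : b * a * b⁻¹ = a ^ m)
    (hn : b⁻¹ * a * b = a ^ n) :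
    (f b * ⁅f a, g b⁆ * (f b)⁻¹ = ⁅f a, g b⁆ ^ m ∧ g b * ⁅f a, g b⁆ * (g b)⁻¹ = ⁅f a, g b⁆ ^ m) ∧
      ((f b)⁻¹ * ⁅f a, g b⁆ * f b = ⁅f a, g b⁆ ^ n ∧
        (g b)⁻¹ * ⁅f a, g b⁆ * g b = ⁅f a, g b⁆ ^ n) := by
  have h1 : b ^ (1 : ℤ) * a * (b ^ (1 : ℤ))⁻¹ = a ^ m := by rwa [zpow_one]
  have h2 : b ^ (-1 : ℤ) * a * (b ^ (-1 : ℤ))⁻¹ = a ^ n := by rwa [zpow_neg_one, inv_inv]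
  have := conj_commutatorElement_f hc hn h1
  have := conj_commutatorElement_g hc hn h1
  have := conj_commutatorElement_f hc hn h2
  have := conj_commutatorElement_g hc hn h2
  simp_all only [zpow_one, zpow_neg_one, map_inv, inv_inv, and_self]

theorem zpowers_commutatorElement_normal (hc : ∀ h, Commute (f h) (g h))
    (htop : closure (Set.range f ∪ Set.range g) = ⊤) (hgen : closure ({a, b} : Set H) = ⊤)
    (hm : b * a * b⁻¹ = a ^ m) (hn : b⁻¹ * a * b = a ^ n) : (zpowers ⁅f a, g b⁆).Normal := by
  obtain ⟨⟨hfb, hgb⟩, hfb', hgb'⟩ := conj_b_commutatorElement hc hm hn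
  have hfa := commute_commutatorElement_f hc hn
  have hga := commute_commutatorElement_g hc hn
  have hconj {u : G} {k l : ℤ} (hk : u * ⁅f a, g b⁆ * u⁻¹ = ⁅f a, g b⁆ ^ k)
      (hl : u⁻¹ * ⁅f a, g b⁆ * u = ⁅f a, g b⁆ ^ l) (x) (hx : x ∈ zpowers ⁅f a, g b⁆) :
      u * x * u⁻¹ ∈ zpowers ⁅f a, g b⁆ ∧ u⁻¹ * x * u ∈ zpowers ⁅f a, g b⁆ :=
    ⟨conj_mem_zpowers hk hx, by simpa using conj_mem_zpowers (u := u⁻¹) (by simpa using hl) hx⟩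
  refine normal_of_conj_mem (closure_image_union_image_eq_top htop hgen) ?_
  rintro _ (⟨s, hs, rfl⟩ | ⟨s, hs, rfl⟩) <;> rcases hs with rfl | rfl
  · exact hconj (k := 1) (l := 1) (by simpa using hfa.symm.mul_inv_cancel)
      (by simpa using hfa.symm.inv_left.mul_inv_cancel)
  · exact hconj hfb hfb'
  · exact hconj (k := 1) (l := 1) (by simpa using hga.symm.mul_inv_cancel)
      (by simpa using hga.symm.inv_left.mul_inv_cancel)
  · exact hconj hgb hgb'

theorem commute_commutatorElement_lgen (hc : ∀ h, Commute (f h) (g h))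
    (htop : closure (Set.range f ∪ Set.range g) = ⊤) (hgen : closure ({a, b} : Set H) = ⊤)
    (hm : b * a * b⁻¹ = a ^ m) (hn : b⁻¹ * a * b = a ^ n) (h : H) :
    Commute ⁅f a, g b⁆ (lgen f g h) := by
  have := zpowers_commutatorElement_normal hc htop hgen hm hn
  obtain ⟨⟨hfb, hgb⟩, -⟩ := conj_b_commutatorElement hc hm hn
  refine commute_lgen_of_conj_eq f g hgen ?_ (mem_zpowers _) h
  rintro s (rfl | rfl) x hx <;> obtain ⟨i, rfl⟩ := mem_zpowers_iff.1 hx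
  · rw [((commute_commutatorElement_f hc hn).zpow_left i).symm.mul_inv_cancel,
      ((commute_commutatorElement_g hc hn).zpow_left i).symm.mul_inv_cancel]
  · rw [← conj_zpow, ← conj_zpow, hfb, hgb]

theorem commutatorElement_mem_centralizer_lsub (hc : ∀ h, Commute (f h) (g h))
    (htop : closure (Set.range f ∪ Set.range g) = ⊤) (hgen : closure ({a, b} : Set H) = ⊤)
    (hm : b * a * b⁻¹ = a ^ m) (hn : b⁻¹ * a * b = a ^ n) (x w : H) :
    ⁅f x, g w⁆ ∈ centralizer (lsub f g : Set G) := by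
  have := lsub_normal f g htop
  have hd : ⁅f a, g b⁆ ∈ centralizer (lsub f g : Set G) := by
    rw [lsub, centralizer_closure]
    rintro _ ⟨h, rfl⟩
    exact (commute_commutatorElement_lgen hc htop hgen hm hn h).symm.eq
  have hd' : ⁅f b, g a⁆ ∈ centralizer (lsub f g : Set G) := by
    rw [← commutatorElement_inv, commutatorElement_g_f_eq hc hn]
    exact inv_mem hd
  let π := QuotientGroup.mk' (centralizer (lsub f g : Set G))
  refine commutatorElement_mem_iff_commute.2
    (commute_apply_apply_of_generators (φ := π.comp f) (ψ := π.comp g) hgen ?_ x w)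
  rintro s (rfl | rfl) t (rfl | rfl)
  · exact (hc _).map π
  · exact commutatorElement_mem_iff_commute.1 hd
  · exact commutatorElement_mem_iff_commute.1 hd'
  · exact (hc _).map π

theorem commutatorElement_f_b_lgen_a (hc : ∀ h, Commute (f h) (g h)) (hm : b * a * b⁻¹ = a ^ m)
    (hn : b⁻¹ * a * b = a ^ n) : ⁅f b, lgen f g a⁆ = f a ^ (1 - m) * ⁅f a, g b⁆⁻¹ := by
  have hfa : f b * f a * (f b)⁻¹ = f a ^ m := by rw [← map_inv, ← map_mul, ← map_mul, hm, map_zpow]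
  have hgf : ⁅f b, g a⁆ = ⁅f a, g b⁆⁻¹ := by
    rw [← commutatorElement_g_f_eq hc hn, commutatorElement_inv]
  calc ⁅f b, lgen f g a⁆
      = ⁅f b, (f a)⁻¹⁆ * ((f a)⁻¹ * ⁅f b, g a⁆ * (f a)⁻¹⁻¹) := by
        rw [lgen, commutatorElement_mul_right_eq_mul_conj]; group
    _ = (f b * f a * (f b)⁻¹)⁻¹ * f a * ⁅f a, g b⁆⁻¹ := by
        rw [hgf, (commute_commutatorElement_f hc hn).inv_left.inv_right.symm.mul_inv_cancel,
          commutatorElement_def (f b)]; group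
    _ = f a ^ (1 - m) * ⁅f a, g b⁆⁻¹ := by rw [hfa]; group

theorem commutatorElement_f_a_lgen_b (hc : ∀ h, Commute (f h) (g h)) (hm : b * a * b⁻¹ = a ^ m)
    (hn : b⁻¹ * a * b = a ^ n) : ⁅f a, lgen f g b⁆ = f a ^ (1 - n) * ⁅f a, g b⁆ ^ n := by
  have hfa : (f b)⁻¹ * f a * f b = f a ^ n := by rw [← map_inv, ← map_mul, ← map_mul, hn, map_zpow]
  obtain ⟨-, hfb, -⟩ := conj_b_commutatorElement hc hm hn
  calc ⁅f a, lgen f g b⁆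
      = ⁅f a, (f b)⁻¹⁆ * ((f b)⁻¹ * ⁅f a, g b⁆ * f b) := by
        rw [lgen, commutatorElement_mul_right_eq_mul_conj]; group
    _ = f a * ((f b)⁻¹ * f a * f b)⁻¹ * ⁅f a, g b⁆ ^ n := by
        rw [hfb, commutatorElement_def (f a) (f b)⁻¹]; group
    _ = f a ^ (1 - n) * ⁅f a, g b⁆ ^ n := by rw [hfa]; group

theorem zpow_mul_zpow_mem_centralizer_range (hc : ∀ h, Commute (f h) (g h))
    (hgen : closure ({a, b} : Set H) = ⊤) (hm : b * a * b⁻¹ = a ^ m) (hn : b⁻¹ * a * b = a ^ n)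
    {i k : ℤ} (h : ⁅f a, g b⁆ ^ (m * k - i) = ⁅f a, g b⁆ ^ k) :
    f a ^ i * ⁅f a, g b⁆ ^ k ∈ centralizer (Set.range g) := by
  obtain ⟨⟨-, hgb⟩, -⟩ := conj_b_commutatorElement hc hm hn
  have hga := commute_commutatorElement_g hc hn
  have hfa := commute_commutatorElement_f hc hn
  have hconj : g b * f a * (g b)⁻¹ = ⁅f a, g b⁆⁻¹ * f a := by rw [commutatorElement_def]; group
  generalize ⁅f a, g b⁆ = d at *
  have hb : g b * (f a ^ i * d ^ k) * (g b)⁻¹ = f a ^ i * d ^ k :=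
    calc g b * (f a ^ i * d ^ k) * (g b)⁻¹
        = (g b * f a * (g b)⁻¹) ^ i * (g b * d * (g b)⁻¹) ^ k := by
          rw [conj_zpow, conj_zpow]; group
      _ = f a ^ i * d ^ (m * k - i) := by
          rw [hconj, hgb, hfa.inv_left.mul_zpow, (hfa.inv_left.zpow_zpow i i).eq]; group
      _ = f a ^ i * d ^ k := by rw [h]
  rw [mem_centralizer_iff]
  rintro _ ⟨w, rfl⟩
  refine (commute_apply_of_generators hgen g _ ?_ w).eq
  rintro s (rfl | rfl)
  · exact (((hc s).zpow_left i).mul_left (hga.zpow_left k)).symm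
  · exact (mul_inv_eq_iff_eq_mul.1 hb)

theorem commutator_commutator_lsub_eq_bot (hc : ∀ h, Commute (f h) (g h))
    (htop : closure (Set.range f ∪ Set.range g) = ⊤) (hgen : closure ({a, b} : Set H) = ⊤)
    (hm : b * a * b⁻¹ = a ^ m) (hn : b⁻¹ * a * b = a ^ n) :
    ⁅⁅f.range, lsub f g⁆, g.range⁆ = ⊥ := by
  have hmn : a ^ (m * n) = a := by
    have := conj_zpow (a := b⁻¹) (b := a) (i := m)
    rw [inv_inv, hn, ← zpow_mul, mul_comm] at this
    rw [this, ← hm]; group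
  have := lsub_inf_centralizer_normal f g htop
    (commutatorElement_mem_centralizer_lsub hc htop hgen hm hn)
  rw [commutator_eq_bot_iff_le_centralizer, MonoidHom.coe_range]
  refine (commutator_range_lsub_le (P := lsub f g ⊓ _) f g hgen ?_).trans inf_le_right
  rintro s (rfl | rfl) t (rfl | rfl)
  · rw [(commute_f_lgen f g hc _).commutator_eq]; exact one_mem _
  · refine ⟨commutatorElement_mem_lsub f g htop _ _, ?_⟩
    rw [commutatorElement_f_a_lgen_b hc hm hn]
    refine zpow_mul_zpow_mem_centralizer_range hc hgen hm hn ?_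
    rw [show m * n - (1 - n) = m * n + (n - 1) by ring, zpow_add,
      commutatorElement_zpow_eq_self hc hn hmn]
    group
  · refine ⟨commutatorElement_mem_lsub f g htop _ _, ?_⟩
    rw [commutatorElement_f_b_lgen_a hc hm hn, ← zpow_neg_one]
    exact zpow_mul_zpow_mem_centralizer_range hc hgen hm hn (by ring_nf)
  · rw [(commute_f_lgen f g hc _).commutator_eq]; exact one_mem _

theorem exists_generators_of_isCyclic {N : Subgroup H} (hN : N.Normal) (hcyc : IsCyclic N)
    (hquot : IsCyclic (H ⧸ N)) : ∃ (a b : H) (m n : ℤ),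
      closure ({a, b} : Set H) = ⊤ ∧ b * a * b⁻¹ = a ^ m ∧ b⁻¹ * a * b = a ^ n := by
  obtain ⟨a, ha⟩ := (Subgroup.isCyclic_iff_exists_zpowers_eq_top N).1 hcyc
  obtain ⟨q, hq⟩ := hquot.exists_generator
  obtain ⟨b, rfl⟩ := QuotientGroup.mk_surjective q
  have haN : a ∈ N := ha ▸ mem_zpowers a
  have hpow {x : H} (hx : x ∈ N) : ∃ i : ℤ, a ^ i = x := mem_zpowers_iff.1 (by rwa [ha])
  obtain ⟨m, hm⟩ := hpow (hN.conj_mem a haN b)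
  obtain ⟨n, hn⟩ := hpow (by simpa using hN.conj_mem a haN b⁻¹)
  refine ⟨a, b, m, n, eq_top_iff.2 fun h _ => ?_, hm.symm, hn.symm⟩
  obtain ⟨j, hj⟩ := mem_zpowers_iff.1 (hq h)
  obtain ⟨i, hi⟩ := hpow ((QuotientGroup.eq_one_iff (h * (b ^ j)⁻¹)).1 (by
    rw [QuotientGroup.mk_mul, QuotientGroup.mk_inv, QuotientGroup.mk_zpow, hj, mul_inv_cancel]))
  rw [show h = a ^ i * b ^ j by rw [hi]; group]
  exact mul_mem (zpow_mem (subset_closure (by simp)) i) (zpow_mem (subset_closure (by simp)) j)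

end Metacyclic

theorem chi_commute (H : Type*) [Group H] (h : H) : Commute (chiIota H h) (chiPsi H h) :=
  commutatorElement_eq_one_iff_commute.1 <| (QuotientGroup.eq_one_iff _).2 <|
    subset_normalClosure ⟨h, rfl⟩

theorem chi_closure_range (H : Type*) [Group H] :
    closure (Set.range (chiIota H) ∪ Set.range (chiPsi H)) = ⊤ := by
  rw [eq_top_iff]
  rintro x -
  obtain ⟨y, rfl⟩ := QuotientGroup.mk'_surjective (normalClosure (chiRel H)) x
  induction y using Monoid.Coprod.induction_on with
  | inl h => exact subset_closure (Or.inl ⟨h, rfl⟩)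
  | inr h => exact subset_closure (Or.inr ⟨h, rfl⟩)
  | mul x y hx hy => rw [map_mul]; exact mul_mem hx hy

end WeakCommutativity

/-- If H is metacyclic (it has a cyclic normal subgroup with cyclic quotient),
then R(H) is trivial. -/
theorem stmt_19 (H : Type*) [Group H] (N : Subgroup H) (hN : N.Normal)
    (hcyc : IsCyclic ↥N) (hquot : IsCyclic (H ⧸ N)) :
    Rsub H = ⊥ := by
  obtain ⟨a, b, m, n, hgen, hm, hn⟩ := WeakCommutativity.exists_generators_of_isCyclic hN hcyc hquot
  exact WeakCommutativity.commutator_commutator_lsub_eq_bot (WeakCommutativity.chi_commute H)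
    (WeakCommutativity.chi_closure_range H) hgen hm hn
end
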